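/- arXiv:2104.11039 — 5 statements merged into one kernel-verified Lean document; each statement's English description precedes it below -/
import Mathlib

section
/- Let p : [0,1] → ℝ^d be piecewise constant, let q_j ∈ ℝ^d and knots 0 = s₀ < s₁ < ⋯ < s_m = 1 be given, and let Φ(t₁,…,t_{m−1}) = Σ_{j=0}^{m−1} √((s_{j+1} − s_j) · ∫_{t_j}^{t_{j+1}} ⟨p(t), q_j⟩₊² dt) with t₀ = 0, t_m = 1. Let U₁, …, U_{m−1} ⊆ [0,1] be nonempty intervals such that p is constant on the interior of each U_j, and set U = (U₁ × ⋯ × U_{m−1}) ∩ {0 ≤ t₁ ≤ ⋯ ≤ t_{m−1} ≤ 1}. Then Φ restricted to U is concave. -/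
open Set MeasureTheory
open scoped RealInnerProductSpace

lemma aux_sqrt_jensen (u v a b : ℝ) (hu : 0 ≤ u) (hv : 0 ≤ v) (ha : 0 ≤ a) (hb : 0 ≤ b)
    (hab : a + b = 1) :
    a * Real.sqrt u + b * Real.sqrt v ≤ Real.sqrt (a * u + b * v) := by
  have h1 : Real.sqrt u ^ 2 = u := Real.sq_sqrt hu
  have h2 : Real.sqrt v ^ 2 = v := Real.sq_sqrt hv
  have hL : 0 ≤ a * Real.sqrt u + b * Real.sqrt v := by positivity
  rw [← Real.sqrt_sq hL]
  apply Real.sqrt_le_sqrt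
  have h3 : (a * Real.sqrt u + b * Real.sqrt v) ^ 2 ≤ a * Real.sqrt u ^ 2 + b * Real.sqrt v ^ 2 := by
    nlinarith [mul_nonneg (mul_nonneg ha hb) (sq_nonneg (Real.sqrt u - Real.sqrt v))]
  rw [h1, h2] at h3; exact h3

lemma aux_const_integral (f : ℝ → ℝ)
    (x y : ℝ) (c : ℝ) (hc : ∀ u ∈ Ioo x y, f u = c)
    (w : ℝ) (hxw : x ≤ w) (hwy : w ≤ y) :
    ∫ u in x..w, f u = c * (w - x) := by
  rw [intervalIntegral.integral_of_le hxw]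
  have hae : (fun u => f u) =ᵐ[volume.restrict (Ioc x w)] (fun _ => c) := by
    rw [Filter.EventuallyEq, ae_restrict_iff' measurableSet_Ioc]
    filter_upwards [compl_mem_ae_iff.2 (measure_singleton w)] with u hu hmem
    exact hc u ⟨hmem.1, lt_of_lt_of_le (lt_of_le_of_ne hmem.2 (by simpa using hu)) hwy⟩
  rw [integral_congr_ae hae]
  simp [Real.volume_Ioc, ENNReal.toReal_ofReal (sub_nonneg.2 hxw), mul_comm, hxw]

lemma aux_affine (f : ℝ → ℝ)
    (hInt : ∀ x y : ℝ, x ∈ Icc (0:ℝ) 1 → y ∈ Icc (0:ℝ) 1 → IntervalIntegrable f volume x y)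
    (x y : ℝ) (hx : x ∈ Icc (0:ℝ) 1) (hy : y ∈ Icc (0:ℝ) 1) (hxy : x ≤ y)
    (c : ℝ) (hc : ∀ u ∈ Ioo x y, f u = c)
    (a b : ℝ) (ha : 0 ≤ a) (hb : 0 ≤ b) (hab : a + b = 1) :
    ∫ u in (0:ℝ)..(a * x + b * y), f u =
      a * (∫ u in (0:ℝ)..x, f u) + b * (∫ u in (0:ℝ)..y, f u) := by
  set z := a * x + b * y with hz
  have hxz : x ≤ z := by
    calc x = a * x + b * x := by linear_combination (-x) * hab
    _ ≤ a * x + b * y := by nlinarith [mul_le_mul_of_nonneg_left hxy hb]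
    _ = z := hz.symm
  have hzy : z ≤ y := by
    calc z = a * x + b * y := hz
    _ ≤ a * y + b * y := by nlinarith [mul_le_mul_of_nonneg_left hxy ha]
    _ = y := by linear_combination y * hab
  have hz01 : z ∈ Icc (0:ℝ) 1 := ⟨le_trans hx.1 hxz, le_trans hzy hy.2⟩
  have h0 : (0:ℝ) ∈ Icc (0:ℝ) 1 := by norm_num
  have split1 : ∫ u in (0:ℝ)..z, f u = (∫ u in (0:ℝ)..x, f u) + ∫ u in x..z, f u :=
    (intervalIntegral.integral_add_adjacent_intervals (hInt 0 x h0 hx) (hInt x z hx hz01)).symm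
  have split2 : ∫ u in (0:ℝ)..y, f u = (∫ u in (0:ℝ)..x, f u) + ∫ u in x..y, f u :=
    (intervalIntegral.integral_add_adjacent_intervals (hInt 0 x h0 hx) (hInt x y hx hy)).symm
  have e1 : ∫ u in x..z, f u = c * (z - x) := aux_const_integral f x y c hc z hxz hzy
  have e2 : ∫ u in x..y, f u = c * (y - x) := aux_const_integral f x y c hc y hxy le_rfl
  rw [split1, split2, e1, e2]
  have hzx : z - x = b * (y - x) := by rw [hz]; linear_combination x * hab
  rw [hzx]
  linear_combination (-(∫ u in (0:ℝ)..x, f u)) * hab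

lemma aux_integrable (f : ℝ → ℝ) (l : ℕ) (r : ℕ → ℝ) (hr0 : r 0 = 0) (hrl : r l = 1)
    (hmono : ∀ i < l, r i < r (i + 1))
    (hconst : ∀ i < l, ∀ x ∈ Ico (r i) (r (i + 1)), f x = f (r i)) :
    ∀ x y : ℝ, x ∈ Icc (0:ℝ) 1 → y ∈ Icc (0:ℝ) 1 → IntervalIntegrable f volume x y := by
  have hle : ∀ j : ℕ, j ≤ l → ∀ i : ℕ, i ≤ j → r i ≤ r j := by
    intro j
    induction j with
    | zero => intro _ i hij; simp [Nat.le_zero.mp hij]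
    | succ n ih =>
      intro hjl i hij
      rcases Nat.lt_or_ge i (n + 1) with h | h
      · exact le_trans (ih (by omega) i (Nat.lt_succ_iff.mp h)) (le_of_lt (hmono n (by omega)))
      · have : i = n + 1 := le_antisymm hij h
        simp [this]
  have key : ∀ k, k ≤ l → IntegrableOn f (Ico (r 0) (r k)) volume := by
    intro k
    induction k with
    | zero => intro _; simp
    | succ n ih =>
      intro hk
      have piece : IntegrableOn f (Ico (r n) (r (n + 1))) volume := by
        have hconstn : EqOn (fun _ : ℝ => f (r n)) f (Ico (r n) (r (n + 1))) :=
          fun x hx => (hconst n (by omega) x hx).symm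
        apply IntegrableOn.congr_fun _ hconstn measurableSet_Ico
        rw [integrableOn_const_iff]
        right
        rw [Real.volume_Ico]
        exact ENNReal.ofReal_lt_top
      rw [← Set.Ico_union_Ico_eq_Ico (hle n (by omega) 0 (Nat.zero_le n))
        (le_of_lt (hmono n (by omega)))]
      exact (ih (by omega)).union piece
  have hIcc : IntegrableOn f (Icc (0:ℝ) 1) volume := by
    have h1 : Icc (0:ℝ) 1 = Ico (0:ℝ) 1 ∪ {1} := by
      rw [Set.Ico_union_right]; norm_num
    rw [h1]
    refine IntegrableOn.union ?_ ?_
    · have := key l le_rfl; rwa [hr0, hrl] at this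
    · rw [IntegrableOn, Measure.restrict_singleton, measure_singleton, zero_smul]
      exact integrable_zero_measure
  intro x y hx hy
  rw [intervalIntegrable_iff]
  apply hIcc.mono_set
  refine subset_trans Set.Ioc_subset_Icc_self (Set.Icc_subset_Icc ?_ ?_)
  · exact le_min hx.1 hy.1
  · exact max_le hx.2 hy.2

/-- Appendix Lemma (local concavity): on a product of intervals on whose interiors `p` is
constant, intersected with the monotonicity constraints, the warping loss `Φ` is concave. -/
theorem stmt_3 (d m : ℕ) (hm : 1 ≤ m)
    (p : ℝ → EuclideanSpace ℝ (Fin d))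
    (hp : ∃ (l : ℕ) (r : ℕ → ℝ), 1 ≤ l ∧ r 0 = 0 ∧ r l = 1 ∧
      (∀ i < l, r i < r (i + 1)) ∧
      ∀ i < l, ∀ x ∈ Ico (r i) (r (i + 1)), ∀ y ∈ Ico (r i) (r (i + 1)), p x = p y)
    (s : ℕ → ℝ) (hs0 : s 0 = 0) (hsm : s m = 1) (hs : ∀ j < m, s j < s (j + 1))
    (qv : ℕ → EuclideanSpace ℝ (Fin d))
    (U : ℕ → Set ℝ)
    (hUsub : ∀ j, 0 < j → j < m → U j ⊆ Icc (0:ℝ) 1)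
    (hUne : ∀ j, 0 < j → j < m → (U j).Nonempty)
    (hUint : ∀ j, 0 < j → j < m → Convex ℝ (U j))
    (hUconst : ∀ j, 0 < j → j < m →
      ∀ x ∈ interior (U j), ∀ y ∈ interior (U j), p x = p y)
    (Φ : (ℕ → ℝ) → ℝ)
    (hΦ : ∀ t : ℕ → ℝ, Φ t = ∑ j ∈ Finset.range m,
      Real.sqrt ((s (j + 1) - s j) *
        ∫ u in (if j = 0 then (0:ℝ) else t j)..(if j + 1 = m then (1:ℝ) else t (j + 1)),
          (max ⟪p u, qv j⟫ 0) ^ 2))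
    (Uprod : Set (ℕ → ℝ))
    (hUprod : Uprod = {t : ℕ → ℝ | (∀ j, 0 < j → j < m → t j ∈ U j) ∧
      (∀ j, 0 < j → j < m → 0 ≤ t j ∧ t j ≤ 1) ∧
      (∀ j, 0 < j → j + 1 < m → t j ≤ t (j + 1))}) :
    ConcaveOn ℝ Uprod Φ := by
  obtain ⟨l, r, hl, hr0, hrl, hrmono, hrconst⟩ := hp
  constructor
  · -- Convexity of Uprod
    rw [hUprod]
    rintro t ⟨ht1, ht2, ht3⟩ t' ⟨ht1', ht2', ht3'⟩ a b ha hb hab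
    refine ⟨?_, ?_, ?_⟩
    · intro j hj1 hj2
      have := hUint j hj1 hj2 (ht1 j hj1 hj2) (ht1' j hj1 hj2) ha hb hab
      simpa [smul_eq_mul] using this
    · intro j hj1 hj2
      have h1 := ht2 j hj1 hj2
      have h2 := ht2' j hj1 hj2
      have hcoord : (a • t + b • t') j = a * t j + b * t' j := by
        simp [smul_eq_mul]
      rw [hcoord]
      constructor
      · exact add_nonneg (mul_nonneg ha h1.1) (mul_nonneg hb h2.1)
      · nlinarith [mul_le_mul_of_nonneg_left h1.2 ha, mul_le_mul_of_nonneg_left h2.2 hb]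
    · intro j hj1 hj2
      have h1 := ht3 j hj1 hj2
      have h2 := ht3' j hj1 hj2
      have hcoord : ∀ k, (a • t + b • t') k = a * t k + b * t' k := by
        intro k; simp [smul_eq_mul]
      rw [hcoord, hcoord]
      exact add_le_add (mul_le_mul_of_nonneg_left h1 ha) (mul_le_mul_of_nonneg_left h2 hb)
  · -- Concavity inequality
    intro t ht t' ht' a b ha hb hab
    rw [hUprod, mem_setOf_eq] at ht ht'
    obtain ⟨ht1, ht2, ht3⟩ := ht
    obtain ⟨ht1', ht2', ht3'⟩ := ht'
    rw [hΦ t, hΦ t', hΦ (a • t + b • t')]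
    simp only [smul_eq_mul]
    rw [Finset.mul_sum, Finset.mul_sum, ← Finset.sum_add_distrib]
    apply Finset.sum_le_sum
    intro j hjmem
    rw [Finset.mem_range] at hjmem
    set f : ℝ → ℝ := fun u => (max ⟪p u, qv j⟫ 0) ^ 2 with hf
    have hfconst : ∀ i < l, ∀ x ∈ Ico (r i) (r (i + 1)), f x = f (r i) := by
      intro i hi x hx
      have := hrconst i hi x hx (r i) ⟨le_rfl, hrmono i hi⟩
      simp only [hf, this]
    have hInt : ∀ x y : ℝ, x ∈ Icc (0:ℝ) 1 → y ∈ Icc (0:ℝ) 1 →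
        IntervalIntegrable f volume x y :=
      aux_integrable f l r hr0 hrl hrmono hfconst
    have hfnn : ∀ u : ℝ, 0 ≤ f u := fun u => sq_nonneg _
    -- affine combination of coordinates
    have hcoord : ∀ k, 0 < k → k < m →
        ∫ u in (0:ℝ)..(a * t k + b * t' k), f u =
          a * (∫ u in (0:ℝ)..(t k), f u) + b * (∫ u in (0:ℝ)..(t' k), f u) := by
      intro k hk1 hk2
      have hxU := ht1 k hk1 hk2
      have hyU := ht1' k hk1 hk2
      have hx01 : t k ∈ Icc (0:ℝ) 1 := hUsub k hk1 hk2 hxU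
      have hy01 : t' k ∈ Icc (0:ℝ) 1 := hUsub k hk1 hk2 hyU
      have hcI : ∀ x y : ℝ, x ∈ U k → y ∈ U k → ∃ c, ∀ u ∈ Ioo x y, f u = c := by
        intro x y hxm hym
        rcases lt_or_ge x y with hlt | hle
        · have hsub : Ioo x y ⊆ interior (U k) := by
            apply interior_maximal _ isOpen_Ioo
            have hoc := (hUint k hk1 hk2).ordConnected
            exact fun u hu => hoc.out hxm hym ⟨le_of_lt hu.1, le_of_lt hu.2⟩
          have hu0 : (x + y) / 2 ∈ Ioo x y := ⟨by linarith, by linarith⟩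
          refine ⟨f ((x + y) / 2), fun u hu => ?_⟩
          have := hUconst k hk1 hk2 u (hsub hu) ((x + y) / 2) (hsub hu0)
          simp only [hf, this]
        · exact ⟨0, fun u hu => absurd (hu.1.trans hu.2) (not_lt.mpr hle)⟩
      rcases le_total (t k) (t' k) with hc | hc
      · obtain ⟨c, hcc⟩ := hcI _ _ hxU hyU
        exact aux_affine f hInt _ _ hx01 hy01 hc c hcc a b ha hb hab
      · obtain ⟨c, hcc⟩ := hcI _ _ hyU hxU
        have h := aux_affine f hInt _ _ hy01 hx01 hc c hcc b a hb ha (by linarith)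
        rw [show a * t k + b * t' k = b * t' k + a * t k from add_comm _ _, h]
        ring
    -- endpoints
    have hA01 : ∀ w : ℕ → ℝ, (∀ k, 0 < k → k < m → 0 ≤ w k ∧ w k ≤ 1) →
        (if j = 0 then (0:ℝ) else w j) ∈ Icc (0:ℝ) 1 := by
      intro w hw
      by_cases h0 : j = 0
      · simp [h0]
      · simp only [if_neg h0]
        exact ⟨(hw j (Nat.pos_of_ne_zero h0) hjmem).1, (hw j (Nat.pos_of_ne_zero h0) hjmem).2⟩
    have hB01 : ∀ w : ℕ → ℝ, (∀ k, 0 < k → k < m → 0 ≤ w k ∧ w k ≤ 1) →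
        (if j + 1 = m then (1:ℝ) else w (j + 1)) ∈ Icc (0:ℝ) 1 := by
      intro w hw
      by_cases h1 : j + 1 = m
      · simp [h1]
      · simp only [if_neg h1]
        exact hw (j + 1) (Nat.succ_pos j) (lt_of_le_of_ne hjmem h1)
    have hAB : ∀ w : ℕ → ℝ, (∀ k, 0 < k → k < m → 0 ≤ w k ∧ w k ≤ 1) →
        (∀ k, 0 < k → k + 1 < m → w k ≤ w (k + 1)) →
        (if j = 0 then (0:ℝ) else w j) ≤ (if j + 1 = m then (1:ℝ) else w (j + 1)) := by
      intro w hw hw3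
      by_cases h0 : j = 0
      · by_cases h1 : j + 1 = m
        · rw [if_pos h0, if_pos h1]; norm_num
        · simp only [if_pos h0, if_neg h1]
          exact (hw (j + 1) (Nat.succ_pos j) (lt_of_le_of_ne hjmem h1)).1
      · by_cases h1 : j + 1 = m
        · simp only [if_neg h0, if_pos h1]
          exact (hw j (Nat.pos_of_ne_zero h0) hjmem).2
        · simp only [if_neg h0, if_neg h1]
          exact hw3 j (Nat.pos_of_ne_zero h0) (lt_of_le_of_ne hjmem h1)
    -- split integrals via antiderivative G
    have hsplit : ∀ x y : ℝ, x ∈ Icc (0:ℝ) 1 → y ∈ Icc (0:ℝ) 1 →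
        ∫ u in x..y, f u = (∫ u in (0:ℝ)..y, f u) - (∫ u in (0:ℝ)..x, f u) := by
      intro x y hx hy
      rw [intervalIntegral.integral_interval_sub_left (hInt 0 y (by norm_num) hy)
        (hInt 0 x (by norm_num) hx)]
    have ht01 : ∀ k, 0 < k → k < m → 0 ≤ t k ∧ t k ≤ 1 := ht2
    have ht01' : ∀ k, 0 < k → k < m → 0 ≤ t' k ∧ t' k ≤ 1 := ht2'
    have htz : ∀ k, 0 < k → k < m → 0 ≤ (a • t + b • t') k ∧ (a • t + b • t') k ≤ 1 := by
      intro k hk1 hk2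
      have h1 := ht2 k hk1 hk2
      have h2 := ht2' k hk1 hk2
      have : (a • t + b • t') k = a * t k + b * t' k := by simp [smul_eq_mul]
      rw [this]
      constructor
      · exact add_nonneg (mul_nonneg ha h1.1) (mul_nonneg hb h2.1)
      · nlinarith [mul_le_mul_of_nonneg_left h1.2 ha, mul_le_mul_of_nonneg_left h2.2 hb]
    have htz3 : ∀ k, 0 < k → k + 1 < m → (a • t + b • t') k ≤ (a • t + b • t') (k + 1) := by
      intro k hk1 hk2
      have h1 := ht3 k hk1 hk2
      have h2 := ht3' k hk1 hk2
      have hc : ∀ n, (a • t + b • t') n = a * t n + b * t' n := by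
        intro n; simp [smul_eq_mul]
      rw [hc, hc]
      exact add_le_add (mul_le_mul_of_nonneg_left h1 ha) (mul_le_mul_of_nonneg_left h2 hb)
    -- affineness of G applied to both endpoints
    have hGA : ∫ u in (0:ℝ)..(if j = 0 then (0:ℝ) else (a • t + b • t') j), f u =
        a * (∫ u in (0:ℝ)..(if j = 0 then (0:ℝ) else t j), f u) +
        b * (∫ u in (0:ℝ)..(if j = 0 then (0:ℝ) else t' j), f u) := by
      by_cases h0 : j = 0
      · simp [h0]
      · simp only [if_neg h0]
        have hc : (a • t + b • t') j = a * t j + b * t' j := by simp [smul_eq_mul]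
        rw [hc]
        exact hcoord j (Nat.pos_of_ne_zero h0) hjmem
    have hGB : ∫ u in (0:ℝ)..(if j + 1 = m then (1:ℝ) else (a • t + b • t') (j + 1)), f u =
        a * (∫ u in (0:ℝ)..(if j + 1 = m then (1:ℝ) else t (j + 1)), f u) +
        b * (∫ u in (0:ℝ)..(if j + 1 = m then (1:ℝ) else t' (j + 1)), f u) := by
      by_cases h1 : j + 1 = m
      · simp only [if_pos h1]
        linear_combination (-(∫ u in (0:ℝ)..(1:ℝ), f u)) * hab
      · simp only [if_neg h1]
        have hc : (a • t + b • t') (j + 1) = a * t (j + 1) + b * t' (j + 1) := by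
          simp [smul_eq_mul]
        rw [hc]
        exact hcoord (j + 1) (Nat.succ_pos j) (lt_of_le_of_ne hjmem h1)
    -- put it together
    have hcnn : 0 ≤ s (j + 1) - s j := le_of_lt (sub_pos.2 (hs j hjmem))
    have hItnn : 0 ≤ ∫ u in (if j = 0 then (0:ℝ) else t j)..(if j + 1 = m then (1:ℝ) else t (j + 1)), f u :=
      intervalIntegral.integral_nonneg (hAB t ht2 ht3) (fun u _ => hfnn u)
    have hItnn' : 0 ≤ ∫ u in (if j = 0 then (0:ℝ) else t' j)..(if j + 1 = m then (1:ℝ) else t' (j + 1)), f u :=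
      intervalIntegral.integral_nonneg (hAB t' ht2' ht3') (fun u _ => hfnn u)
    have hkey : (s (j + 1) - s j) *
        ∫ u in (if j = 0 then (0:ℝ) else (a • t + b • t') j)..(if j + 1 = m then (1:ℝ) else (a • t + b • t') (j + 1)), f u =
        a * ((s (j + 1) - s j) * ∫ u in (if j = 0 then (0:ℝ) else t j)..(if j + 1 = m then (1:ℝ) else t (j + 1)), f u) +
        b * ((s (j + 1) - s j) * ∫ u in (if j = 0 then (0:ℝ) else t' j)..(if j + 1 = m then (1:ℝ) else t' (j + 1)), f u) := by
      rw [hsplit _ _ (hA01 _ htz) (hB01 _ htz),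
          hsplit _ _ (hA01 _ ht2) (hB01 _ ht2),
          hsplit _ _ (hA01 _ ht2') (hB01 _ ht2'),
          hGA, hGB]
      ring
    rw [hkey]
    exact aux_sqrt_jensen _ _ a b (mul_nonneg hcnn hItnn) (mul_nonneg hcnn hItnn') ha hb hab
end

section
/- Let d ≥ 2 and let Q, P : [0,1] → ℝ^d be spline curves, each of degree 2 or 3 (with possibly different knot sets), such that for each pair of consecutive knots κ_k < κ_{k+1} of Q, the image Q([κ_k, κ_{k+1}]) is not contained in any affine line of ℝ^d. Let γ : [0,1] → [0,1] be monotonically increasing and onto. If P = Q ∘ γ, then γ is the identity on [0,1]. -/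
open Set

open Polynomial Filter Topology

private lemma polyEq {f g : Polynomial ℝ} {a b : ℝ} (hab : a < b)
    (h : ∀ t ∈ Icc a b, f.eval t = g.eval t) : f = g := by
  apply Polynomial.eq_of_infinite_eval_eq
  apply Set.Infinite.mono (s := Icc a b)
  · exact fun t ht => h t ht
  · exact Set.Icc_infinite hab

private lemma cubicTaylor (q : Polynomial ℝ) (hq : q.natDegree ≤ 3) (c : ℝ) :
    q = C (q.eval c) + C ((taylor c q).coeff 1) * (X - C c)
      + C ((taylor c q).coeff 2) * (X - C c) ^ 2
      + C ((taylor c q).coeff 3) * (X - C c) ^ 3 := by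
  conv_lhs => rw [← sum_taylor_eq q c]
  rw [Polynomial.sum_over_range' (p := taylor c q)
      (f := fun i a => C a * (X - C c) ^ i) (by simp) 4
      (by rw [natDegree_taylor]; omega)]
  simp [Finset.sum_range_succ, taylor_coeff_zero]

private lemma repDeriv (a₀ a₁ a₂ a₃ c : ℝ) :
    (C a₀ + C a₁ * (X - C c) + C a₂ * (X - C c) ^ 2 + C a₃ * (X - C c) ^ 3 : Polynomial ℝ).derivative
      = C a₁ + C (2*a₂) * (X - C c) + C (3*a₃) * (X - C c) ^ 2 := by
  simp [derivative_pow]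
  ring

private lemma repDerivEval (a₀ a₁ a₂ a₃ c : ℝ) :
    ((C a₀ + C a₁ * (X - C c) + C a₂ * (X - C c) ^ 2 + C a₃ * (X - C c) ^ 3 : Polynomial ℝ).derivative).eval c = a₁ := by
  rw [repDeriv]; simp

private lemma repDeriv2Eval (a₀ a₁ a₂ a₃ c : ℝ) :
    (((C a₀ + C a₁ * (X - C c) + C a₂ * (X - C c) ^ 2 + C a₃ * (X - C c) ^ 3 : Polynomial ℝ).derivative).derivative).eval c = 2*a₂ := by
  rw [repDeriv]
  have : (C a₁ + C (2*a₂) * (X - C c) + C (3*a₃) * (X - C c) ^ 2 : Polynomial ℝ)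
      = C a₁ + C (2*a₂) * (X - C c) + C (3*a₃) * (X - C c) ^ 2 + C 0 * (X - C c) ^ 3 := by
    simp
  rw [this, repDeriv]
  simp

private lemma knotLoc_lt {K : ℕ} {κ : ℕ → ℝ} (hκ : ∀ k < K, κ k < κ (k+1))
    (hκ0 : κ 0 = 0) (hκK : κ K = 1) {c : ℝ} (h0 : 0 < c) (h1 : c ≤ 1) :
    ∃ k < K, κ k < c ∧ c ≤ κ (k+1) := by
  classical
  set P : ℕ → Prop := fun k => κ k < c with hP
  have hP0 : P 0 := by rw [hP]; simp [hκ0, h0]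
  have hk0 : P (Nat.findGreatest P K) := Nat.findGreatest_spec (Nat.zero_le K) hP0
  have hle : Nat.findGreatest P K ≤ K := Nat.findGreatest_le K
  have hne : Nat.findGreatest P K ≠ K := by
    intro h; rw [h] at hk0; simp only [hP, hκK] at hk0; linarith
  refine ⟨Nat.findGreatest P K, lt_of_le_of_ne hle hne, hk0, ?_⟩
  by_contra hcon
  exact Nat.findGreatest_is_greatest (Nat.lt_succ_self _)
    (Nat.succ_le_of_lt (lt_of_le_of_ne hle hne)) (not_le.mp hcon)

private lemma knotLoc_le {K : ℕ} {κ : ℕ → ℝ} (hκ : ∀ k < K, κ k < κ (k+1))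
    (hκ0 : κ 0 = 0) (hκK : κ K = 1) {c : ℝ} (h0 : 0 ≤ c) (h1 : c < 1) :
    ∃ k < K, κ k ≤ c ∧ c < κ (k+1) := by
  classical
  set P : ℕ → Prop := fun k => κ k ≤ c with hP
  have hP0 : P 0 := by rw [hP]; simp [hκ0, h0]
  have hk0 : P (Nat.findGreatest P K) := Nat.findGreatest_spec (Nat.zero_le K) hP0
  have hle : Nat.findGreatest P K ≤ K := Nat.findGreatest_le K
  have hne : Nat.findGreatest P K ≠ K := by
    intro h; rw [h] at hk0; simp only [hP, hκK] at hk0; linarith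
  refine ⟨Nat.findGreatest P K, lt_of_le_of_ne hle hne, hk0, ?_⟩
  by_contra hcon
  exact Nat.findGreatest_is_greatest (Nat.lt_succ_self _)
    (Nat.succ_le_of_lt (lt_of_le_of_ne hle hne)) (not_lt.mp hcon)

private lemma knotLoc {K : ℕ} {κ : ℕ → ℝ} (hK : 1 ≤ K) (hκ : ∀ k < K, κ k < κ (k+1))
    (hκ0 : κ 0 = 0) (hκK : κ K = 1) {c : ℝ} (h0 : 0 ≤ c) (h1 : c ≤ 1) :
    ∃ k < K, κ k ≤ c ∧ c ≤ κ (k+1) := by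
  rcases lt_or_eq_of_le h1 with h | h
  · obtain ⟨k, hk, h2, h3⟩ := knotLoc_le hκ hκ0 hκK h0 h
    exact ⟨k, hk, h2, le_of_lt h3⟩
  · refine ⟨K - 1, by omega, ?_, ?_⟩
    · have := hκ (K-1) (by omega)
      have hx : K - 1 + 1 = K := by omega
      rw [hx] at this; rw [h, ← hκK]; linarith
    · have hx : K - 1 + 1 = K := by omega
      rw [hx, h, hκK]

private lemma signLemmaPos {a b t₀ cc : ℝ} (hab : a < b) {φ : ℝ → ℝ}
    (hmono : MonotoneOn φ (Icc a b)) (hcont : ContinuousOn φ (Icc a b)) (hcc : 0 < cc)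
    (hbr : ∀ t ∈ Icc a b, φ t = cc*(t - t₀) ∨ φ t = -(cc*(t - t₀))) :
    ∀ t ∈ Icc a b, φ t = cc*(t - t₀) := by
  intro t₂ ht₂
  by_contra hne
  have hval : φ t₂ = -(cc*(t₂ - t₀)) := (hbr t₂ ht₂).resolve_left hne
  have ht₂0 : t₂ ≠ t₀ := by
    intro h; rw [h] at hval hne; exact hne (by rw [hval]; ring)
  rcases lt_or_gt_of_ne ht₂0 with hlt | hgt
  · -- t₂ < t₀, φ t₂ = cc*(t₀ - t₂) > 0
    rcases lt_or_eq_of_le ht₂.1 with ha | ha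
    · -- a < t₂ : left-limit argument
      have hall : ∀ t ∈ Ico a t₂, φ t = cc*(t - t₀) := by
        intro t ht
        have htm : t ∈ Icc a b := ⟨ht.1, le_trans (le_of_lt ht.2) ht₂.2⟩
        rcases hbr t htm with h | h
        · exact h
        · exfalso
          have h1 : φ t ≤ φ t₂ := hmono htm ht₂ (le_of_lt ht.2)
          have := ht.2
          nlinarith [h, hval]
      have hsub : Ico a t₂ ⊆ Icc a b := fun x hx => ⟨hx.1, le_trans (le_of_lt hx.2) ht₂.2⟩
      have h1 : Tendsto φ (𝓝[Ico a t₂] t₂) (𝓝 (φ t₂)) :=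
        ((hcont t₂ ht₂).mono hsub)
      have h2 : Tendsto φ (𝓝[Ico a t₂] t₂) (𝓝 (cc*(t₂ - t₀))) := by
        have hg : Tendsto (fun t => cc*(t - t₀)) (𝓝[Ico a t₂] t₂) (𝓝 (cc*(t₂ - t₀))) :=
          ((continuous_const.mul (continuous_id.sub continuous_const)).tendsto t₂).mono_left
            nhdsWithin_le_nhds
        apply hg.congr'
        filter_upwards [self_mem_nhdsWithin] with x hx using (hall x hx).symm
      haveI := right_nhdsWithin_Ico_neBot ha
      have := tendsto_nhds_unique h1 h2
      exact hne this
    · -- a = t₂ : pick point to the right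
      set t := min t₀ b with htdef
      have hat : a < t := by rw [htdef]; rw [← ha] at hlt; exact lt_min hlt hab
      have htm : t ∈ Icc a b := ⟨le_of_lt hat, min_le_right _ _⟩
      have h1 : φ t₂ ≤ φ t := hmono ht₂ htm (by rw [← ha]; exact le_of_lt hat)
      have htt0 : t ≤ t₀ := min_le_left _ _
      rcases hbr t htm with h | h
      · nlinarith [h, hval]
      · have : a = t₂ := ha
        nlinarith [h, hval, hat]
  · -- t₀ < t₂, φ t₂ = -(cc*(t₂ - t₀)) < 0
    rcases lt_or_eq_of_le ht₂.2 with hb | hb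
    · -- t₂ < b : right-limit argument
      have hall : ∀ t ∈ Ioc t₂ b, φ t = cc*(t - t₀) := by
        intro t ht
        have htm : t ∈ Icc a b := ⟨le_trans ht₂.1 (le_of_lt ht.1), ht.2⟩
        rcases hbr t htm with h | h
        · exact h
        · exfalso
          have h1 : φ t₂ ≤ φ t := hmono ht₂ htm (le_of_lt ht.1)
          have := ht.1
          nlinarith [h, hval]
      have hsub : Ioc t₂ b ⊆ Icc a b := fun x hx => ⟨le_trans ht₂.1 (le_of_lt hx.1), hx.2⟩
      have h1 : Tendsto φ (𝓝[Ioc t₂ b] t₂) (𝓝 (φ t₂)) := ((hcont t₂ ht₂).mono hsub)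
      have h2 : Tendsto φ (𝓝[Ioc t₂ b] t₂) (𝓝 (cc*(t₂ - t₀))) := by
        have hg : Tendsto (fun t => cc*(t - t₀)) (𝓝[Ioc t₂ b] t₂) (𝓝 (cc*(t₂ - t₀))) :=
          ((continuous_const.mul (continuous_id.sub continuous_const)).tendsto t₂).mono_left
            nhdsWithin_le_nhds
        apply hg.congr'
        filter_upwards [self_mem_nhdsWithin] with x hx using (hall x hx).symm
      haveI := left_nhdsWithin_Ioc_neBot hb
      have := tendsto_nhds_unique h1 h2
      exact hne this
    · -- t₂ = b : pick point to the left
      set t := max t₀ a with htdef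
      have hta : t < b := by rw [htdef]; rw [hb] at hgt; exact max_lt hgt hab
      have htm : t ∈ Icc a b := ⟨le_max_right _ _, le_of_lt hta⟩
      have h1 : φ t ≤ φ t₂ := hmono htm ht₂ (by rw [← hb] at hta; exact le_of_lt hta)
      have htt0 : t₀ ≤ t := le_max_left _ _
      rcases hbr t htm with h | h
      · nlinarith [h, hval]
      · have : t₂ = b := hb
        nlinarith [h, hval, hta]

private lemma signLemma {a b t₀ cc : ℝ} (hab : a < b) {φ : ℝ → ℝ}
    (hmono : MonotoneOn φ (Icc a b)) (hcont : ContinuousOn φ (Icc a b)) (hcc : cc ≠ 0)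
    (hbr : ∀ t ∈ Icc a b, φ t = cc*(t - t₀) ∨ φ t = -(cc*(t - t₀))) :
    (∀ t ∈ Icc a b, φ t = cc*(t - t₀)) ∨ (∀ t ∈ Icc a b, φ t = -(cc*(t - t₀))) := by
  rcases lt_or_gt_of_ne hcc with h | h
  · right
    have hbr' : ∀ t ∈ Icc a b, φ t = (-cc)*(t - t₀) ∨ φ t = -((-cc)*(t - t₀)) := by
      intro t ht; rcases hbr t ht with h' | h'
      · right; rw [h']; ring
      · left; rw [h']; ring
    have := signLemmaPos hab hmono hcont (by linarith) hbr'
    intro t ht; rw [this t ht]; ring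
  · exact Or.inl (signLemmaPos hab hmono hcont h hbr)

private lemma gammaZero {γ : ℝ → ℝ} (hmono : MonotoneOn γ (Icc 0 1))
    (hmaps : MapsTo γ (Icc 0 1) (Icc 0 1)) (hsurj : SurjOn γ (Icc 0 1) (Icc 0 1)) :
    γ 0 = 0 := by
  obtain ⟨c, hc, hgc⟩ := hsurj (show (0:ℝ) ∈ Icc (0:ℝ) 1 by simp)
  have h1 : γ 0 ≤ γ c := hmono (by simp) hc hc.1
  have h2 := (hmaps (show (0:ℝ) ∈ Icc (0:ℝ) 1 by simp)).1
  rw [hgc] at h1; linarith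

private lemma gammaOne {γ : ℝ → ℝ} (hmono : MonotoneOn γ (Icc 0 1))
    (hmaps : MapsTo γ (Icc 0 1) (Icc 0 1)) (hsurj : SurjOn γ (Icc 0 1) (Icc 0 1)) :
    γ 1 = 1 := by
  obtain ⟨c, hc, hgc⟩ := hsurj (show (1:ℝ) ∈ Icc (0:ℝ) 1 by simp)
  have h1 : γ c ≤ γ 1 := hmono hc (by simp) hc.2
  have h2 := (hmaps (show (1:ℝ) ∈ Icc (0:ℝ) 1 by simp)).2
  rw [hgc] at h1; linarith

private lemma gammaCont {γ : ℝ → ℝ} (hmono : MonotoneOn γ (Icc 0 1))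
    (hmaps : MapsTo γ (Icc 0 1) (Icc 0 1)) (hsurj : SurjOn γ (Icc 0 1) (Icc 0 1)) :
    ContinuousOn γ (Icc (0:ℝ) 1) := by
  intro a ha
  have h01 : Icc (0:ℝ) 1 = Icc 0 a ∪ Icc a 1 := (Icc_union_Icc_eq_Icc ha.1 ha.2).symm
  have hga0 : 0 ≤ γ a := (hmaps ha).1
  have hga1 : γ a ≤ 1 := (hmaps ha).2
  have hleft : ContinuousWithinAt γ (Icc 0 a) a := by
    by_cases h0 : γ a = 0
    · -- γ is constant 0 on Icc 0 a
      apply (continuousWithinAt_const (b := (0:ℝ))).congr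
      · intro t ht
        have ht' : t ∈ Icc (0:ℝ) 1 := ⟨ht.1, le_trans ht.2 ha.2⟩
        have h1 : γ t ≤ γ a := hmono ht' ha ht.2
        have h2 : 0 ≤ γ t := (hmaps ht').1
        rw [h0] at h1; linarith
      · exact h0
    · rcases eq_or_lt_of_le ha.1 with h0a | h0a
      · rw [← h0a, Icc_self]
        exact continuousWithinAt_singleton
      · have key : ContinuousWithinAt γ (Iic a) a := by
          apply continuousWithinAt_left_of_monotoneOn_of_exists_between
            (s := Icc 0 a)
          · exact hmono.mono (Icc_subset_Icc le_rfl ha.2)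
          · exact Icc_mem_nhdsLE_of_mem ⟨h0a, le_rfl⟩
          · intro y hy
            have hpos : 0 < γ a := lt_of_le_of_ne hga0 (Ne.symm h0)
            have hz : max y 0 < γ a := max_lt hy hpos
            obtain ⟨w, hw1, hw2⟩ := exists_between hz
            have hw01 : w ∈ Icc (0:ℝ) 1 :=
              ⟨le_trans (le_max_right _ _) (le_of_lt hw1), le_trans (le_of_lt hw2) hga1⟩
            obtain ⟨c, hc, hgc⟩ := hsurj hw01
            have hca : c ≤ a := by
              by_contra hcon
              have := hmono ha hc (le_of_lt (not_le.mp hcon))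
              rw [hgc] at this; linarith
            exact ⟨c, ⟨hc.1, hca⟩, by
              rw [hgc]
              exact ⟨lt_of_le_of_lt (le_max_left y 0) hw1, hw2⟩⟩
        exact key.mono Icc_subset_Iic_self
  have hright : ContinuousWithinAt γ (Icc a 1) a := by
    by_cases h0 : γ a = 1
    · apply (continuousWithinAt_const (b := (1:ℝ))).congr
      · intro t ht
        have ht' : t ∈ Icc (0:ℝ) 1 := ⟨le_trans ha.1 ht.1, ht.2⟩
        have h1 : γ a ≤ γ t := hmono ha ht' ht.1
        have h2 : γ t ≤ 1 := (hmaps ht').2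
        rw [h0] at h1; linarith
      · exact h0
    · rcases eq_or_lt_of_le ha.2 with h0a | h0a
      · rw [h0a, Icc_self]
        exact continuousWithinAt_singleton
      · have key : ContinuousWithinAt γ (Ici a) a := by
          apply continuousWithinAt_right_of_monotoneOn_of_exists_between
            (s := Icc a 1)
          · exact hmono.mono (Icc_subset_Icc ha.1 le_rfl)
          · exact Icc_mem_nhdsGE_of_mem ⟨le_rfl, h0a⟩
          · intro y hy
            have hlt1 : γ a < 1 := lt_of_le_of_ne hga1 h0
            have hz : γ a < min y 1 := lt_min hy hlt1
            obtain ⟨w, hw1, hw2⟩ := exists_between hz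
            have hw01 : w ∈ Icc (0:ℝ) 1 :=
              ⟨le_trans hga0 (le_of_lt hw1), le_trans (le_of_lt hw2) (min_le_right _ _)⟩
            obtain ⟨c, hc, hgc⟩ := hsurj hw01
            have hca : a ≤ c := by
              by_contra hcon
              have := hmono hc ha (le_of_lt (not_le.mp hcon))
              rw [hgc] at this; linarith
            exact ⟨c, ⟨hca, hc.2⟩, by
              rw [hgc]
              exact ⟨hw1, lt_of_lt_of_le hw2 (min_le_left y 1)⟩⟩
        exact key.mono Icc_subset_Ici_self
  rw [ContinuousWithinAt, h01]
  exact ContinuousWithinAt.union hleft hright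

private lemma derivWithinPoly {f : ℝ → ℝ} {F : Polynomial ℝ} {a b x : ℝ}
    (hab : a < b) (hx : x ∈ Icc a b) (hsub : Icc a b ⊆ Icc (0:ℝ) 1)
    (heq : ∀ t ∈ Icc a b, f t = F.eval t)
    (hdiff : DifferentiableWithinAt ℝ f (Icc (0:ℝ) 1) x) :
    derivWithin f (Icc (0:ℝ) 1) x = F.derivative.eval x := by
  have hu : UniqueDiffWithinAt ℝ (Icc a b) x := (uniqueDiffOn_Icc hab) x hx
  have h1 : derivWithin f (Icc a b) x = derivWithin f (Icc (0:ℝ) 1) x :=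
    derivWithin_subset hsub hu hdiff
  have h2 : derivWithin f (Icc a b) x = derivWithin (fun t => F.eval t) (Icc a b) x :=
    derivWithin_congr (fun t ht => heq t ht) (heq x hx)
  have h3 : derivWithin (fun t => F.eval t) (Icc a b) x = F.derivative.eval x :=
    ((F.hasDerivAt x).hasDerivWithinAt).derivWithin hu
  rw [← h1, h2, h3]

private lemma derivMatch₂ {f : ℝ → ℝ} {F G : Polynomial ℝ} {a₁ b₁ a₂ b₂ c : ℝ}
    (h1 : a₁ < b₁) (h2 : a₂ < b₂) (hc1 : c ∈ Icc a₁ b₁) (hc2 : c ∈ Icc a₂ b₂)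
    (hs1 : Icc a₁ b₁ ⊆ Icc (0:ℝ) 1) (hs2 : Icc a₂ b₂ ⊆ Icc (0:ℝ) 1)
    (hF : ∀ t ∈ Icc a₁ b₁, f t = F.eval t) (hG : ∀ t ∈ Icc a₂ b₂, f t = G.eval t)
    (hf : ContDiffOn ℝ 1 f (Icc (0:ℝ) 1)) :
    F.derivative.eval c = G.derivative.eval c := by
  have hdiff : DifferentiableWithinAt ℝ f (Icc (0:ℝ) 1) c :=
    (hf.differentiableOn (by norm_num)) c (hs1 hc1)
  rw [← derivWithinPoly h1 hc1 hs1 hF hdiff, ← derivWithinPoly h2 hc2 hs2 hG hdiff]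

private lemma deriv2Match₂ {f : ℝ → ℝ} {F G : Polynomial ℝ} {a₁ b₁ a₂ b₂ c : ℝ}
    (h1 : a₁ < b₁) (h2 : a₂ < b₂) (hc1 : c ∈ Icc a₁ b₁) (hc2 : c ∈ Icc a₂ b₂)
    (hs1 : Icc a₁ b₁ ⊆ Icc (0:ℝ) 1) (hs2 : Icc a₂ b₂ ⊆ Icc (0:ℝ) 1)
    (hF : ∀ t ∈ Icc a₁ b₁, f t = F.eval t) (hG : ∀ t ∈ Icc a₂ b₂, f t = G.eval t)
    (hf : ContDiffOn ℝ 2 f (Icc (0:ℝ) 1)) :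
    F.derivative.derivative.eval c = G.derivative.derivative.eval c := by
  set f1 := derivWithin f (Icc (0:ℝ) 1) with hf1def
  have hf1 : ContDiffOn ℝ 1 f1 (Icc (0:ℝ) 1) :=
    hf.derivWithin uniqueDiffOn_Icc_zero_one (by norm_num)
  have hdOn : ∀ x ∈ Icc (0:ℝ) 1, DifferentiableWithinAt ℝ f (Icc (0:ℝ) 1) x :=
    fun x hx => (hf.differentiableOn (by norm_num)) x hx
  have hL : ∀ t ∈ Icc a₁ b₁, f1 t = F.derivative.eval t := by
    intro t ht
    exact derivWithinPoly h1 ht hs1 hF (hdOn t (hs1 ht))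
  have hR : ∀ t ∈ Icc a₂ b₂, f1 t = G.derivative.eval t := by
    intro t ht
    exact derivWithinPoly h2 ht hs2 hG (hdOn t (hs2 ht))
  exact derivMatch₂ h1 h2 hc1 hc2 hs1 hs2 hL hR hf1

private lemma contDiffOnComp {d : ℕ} {n : ℕ∞} {P : ℝ → EuclideanSpace ℝ (Fin d)}
    (h : ContDiffOn ℝ n P (Icc (0:ℝ) 1)) (i : Fin d) :
    ContDiffOn ℝ n (fun t => P t i) (Icc (0:ℝ) 1) :=
by
  have := (EuclideanSpace.proj (𝕜 := ℝ) i).contDiff.comp_contDiffOn h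
  exact this

private lemma lineExcl {d : ℕ} (hd : 2 ≤ d) {Q : ℝ → EuclideanSpace ℝ (Fin d)} {α β : ℝ}
    (hnl : ¬ ∃ (a v : EuclideanSpace ℝ (Fin d)), v ≠ 0 ∧
      ∀ t ∈ Icc α β, ∃ c : ℝ, Q t = a + c • v)
    (aa ee : Fin d → ℝ) (w : ℝ → ℝ)
    (hrep : ∀ t ∈ Icc α β, ∀ i, Q t i = aa i + ee i * w t) : False := by
  classical
  by_cases he : ∃ i, ee i ≠ 0
  · obtain ⟨i0, hi0⟩ := he
    apply hnl
    refine ⟨WithLp.toLp 2 (fun i => aa i), WithLp.toLp 2 (fun i => ee i),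
      fun h0 => hi0 (by simpa using congrArg (fun v : EuclideanSpace ℝ (Fin d) => v i0) h0), fun t ht => ⟨w t, ?_⟩⟩
    ext i
    have := hrep t ht i
    simp only [PiLp.add_apply, PiLp.smul_apply, smul_eq_mul, PiLp.toLp_apply]
    rw [this]; ring
  · push_neg at he
    apply hnl
    have h0d : 0 < d := by omega
    refine ⟨WithLp.toLp 2 (fun i => aa i),
      EuclideanSpace.single (⟨0, h0d⟩ : Fin d) (1:ℝ), ?_, fun t ht => ⟨0, ?_⟩⟩
    · intro h0
      have : (EuclideanSpace.single (⟨0, h0d⟩ : Fin d) (1:ℝ)) ⟨0, h0d⟩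
          = (0 : EuclideanSpace ℝ (Fin d)) ⟨0, h0d⟩ := by rw [h0]
      rw [EuclideanSpace.single_apply] at this
      simp at this
    · ext i
      have := hrep t ht i
      simp only [PiLp.add_apply, PiLp.smul_apply, smul_eq_mul, zero_mul, add_zero, PiLp.toLp_apply]
      rw [this, he i]; ring

private lemma indepPair {d : ℕ} (hd : 2 ≤ d) {Q : ℝ → EuclideanSpace ℝ (Fin d)} {α β : ℝ}
    (hnl : ¬ ∃ (a v : EuclideanSpace ℝ (Fin d)), v ≠ 0 ∧
      ∀ t ∈ Icc α β, ∃ c : ℝ, Q t = a + c • v)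
    (q : Fin d → Polynomial ℝ)
    (hq : ∀ i, ∀ t ∈ Icc α β, Q t i = (q i).eval t) :
    ∃ i j, 1 ≤ (q i).natDegree ∧ ∀ x y : ℝ, q j ≠ C x + C y * q i := by
  classical
  by_contra hcon
  push_neg at hcon
  by_cases hex : ∃ i, 1 ≤ (q i).natDegree
  · obtain ⟨i0, hi0⟩ := hex
    have hch : ∀ j, ∃ x y : ℝ, q j = C x + C y * q i0 := fun j => hcon i0 j hi0
    choose x y hxy using hch
    apply lineExcl hd hnl x y (fun t => (q i0).eval t)
    intro t ht i
    rw [hq i t ht, hxy i]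
    simp
  · push_neg at hex
    apply lineExcl hd hnl (fun i => (q i).coeff 0) (fun _ => 0) (fun _ => 0)
    intro t ht i
    rw [hq i t ht]
    have hrw : q i = C ((q i).coeff 0) := eq_C_of_natDegree_le_zero (by have := hex i; omega)
    rw [hrw]
    simp

private lemma caseA {γ : ℝ → ℝ} {a b : ℝ} (hab : a < b)
    {ℓ w p pw : Polynomial ℝ} (hℓdeg : ℓ.natDegree = 1) (hwdeg : 2 ≤ w.natDegree)
    (hpdeg : p.natDegree ≤ 3) (hpwdeg : pw.natDegree ≤ 3)
    (hℓ : ∀ t ∈ Icc a b, ℓ.eval (γ t) = p.eval t)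
    (hw : ∀ t ∈ Icc a b, w.eval (γ t) = pw.eval t) :
    ∃ σ c₀ : ℝ, ∀ t ∈ Icc a b, γ t = σ * t + c₀ := by
  have hℓ0 : ℓ ≠ 0 := fun h => by simp [h] at hℓdeg
  have hc1 : ℓ.coeff 1 ≠ 0 := by
    have := leadingCoeff_ne_zero.mpr hℓ0
    rwa [leadingCoeff, hℓdeg] at this
  have hℓrep : ℓ = C (ℓ.coeff 1) * X + C (ℓ.coeff 0) :=
    eq_X_add_C_of_natDegree_le_one (le_of_eq hℓdeg)
  set G : Polynomial ℝ := C (1/(ℓ.coeff 1)) * (p - C (ℓ.coeff 0)) with hGdef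
  have hγG : ∀ t ∈ Icc a b, γ t = G.eval t := by
    intro t ht
    have h1 := hℓ t ht
    rw [hℓrep] at h1
    simp only [eval_add, eval_mul, eval_C, eval_X] at h1
    rw [hGdef]
    simp only [eval_mul, eval_C, eval_sub]
    field_simp
    linarith [h1]
  have hcomp : w.comp G = pw := by
    apply polyEq hab
    intro t ht
    rw [eval_comp, ← hγG t ht, hw t ht]
  have hdegG : G.natDegree ≤ 1 := by
    by_contra hcon
    have h4 : 4 ≤ (w.comp G).natDegree := by
      rw [natDegree_comp]
      have : 2 ≤ G.natDegree := by omega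
      nlinarith [hwdeg]
    rw [hcomp] at h4; omega
  refine ⟨G.coeff 1, G.coeff 0, fun t ht => ?_⟩
  rw [hγG t ht, eq_X_add_C_of_natDegree_le_one hdegG]
  simp

private lemma caseB {γ : ℝ → ℝ} {a b : ℝ} (hab : a < b)
    (hmono : MonotoneOn γ (Icc a b)) (hcont : ContinuousOn γ (Icc a b)) (hne : γ a < γ b)
    {u v p pv : Polynomial ℝ} (hudeg : u.natDegree = 2) (hvdeg : v.natDegree ≤ 3)
    (hpdeg : p.natDegree ≤ 3) (hpvdeg : pv.natDegree ≤ 3)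
    (hindep : ∀ x y : ℝ, v ≠ C x + C y * u)
    (hu : ∀ t ∈ Icc a b, u.eval (γ t) = p.eval t)
    (hv : ∀ t ∈ Icc a b, v.eval (γ t) = pv.eval t) :
    ∃ σ c₀ : ℝ, ∀ t ∈ Icc a b, γ t = σ * t + c₀ := by
  have hu0 : u ≠ 0 := fun h => by simp [h] at hudeg
  have hc2 : u.coeff 2 ≠ 0 := by
    have := leadingCoeff_ne_zero.mpr hu0
    rwa [leadingCoeff, hudeg] at this
  have hco3 : u.coeff 3 = 0 := coeff_eq_zero_of_natDegree_lt (by omega)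
  set m : ℝ := -(u.coeff 1)/(2*(u.coeff 2)) with hmdef
  have rep0 : u = C (u.coeff 0) + C (u.coeff 1) * X + C (u.coeff 2) * X^2
      + C (u.coeff 3) * X^3 := by
    have h := cubicTaylor u (by omega) 0
    simpa [taylor_zero, ← coeff_zero_eq_eval_zero] using h
  have hA1 : (taylor m u).coeff 1 = 0 := by
    rw [taylor_coeff_one]
    conv_lhs => rw [rep0]
    simp only [derivative_add, derivative_mul, derivative_C, derivative_X, derivative_pow,
      eval_add, eval_mul, eval_C, eval_X, eval_pow, zero_mul, mul_one, zero_add, hco3]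
    rw [hmdef]
    norm_num
    field_simp
    ring
  have hA3 : (taylor m u).coeff 3 = 0 := by
    apply coeff_eq_zero_of_natDegree_lt
    rw [natDegree_taylor, hudeg]; omega
  set A0 : ℝ := u.eval m with hA0def
  set A2 : ℝ := (taylor m u).coeff 2 with hA2def
  have hurep : u = C A0 + C A2 * (X - C m)^2 := by
    have h := cubicTaylor u (by omega) m
    rw [hA1, hA3] at h
    simpa using h
  have hA2 : A2 ≠ 0 := by
    intro h0
    rw [h0] at hurep
    simp at hurep
    rw [hurep] at hudeg
    simp at hudeg
  set ρ : Polynomial ℝ := C (1/A2) * (p - C A0) with hρdef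
  have hρ : ∀ t ∈ Icc a b, (γ t - m)^2 = ρ.eval t := by
    intro t ht
    have h1 := hu t ht
    rw [hurep] at h1
    simp only [eval_add, eval_mul, eval_C, eval_pow, eval_sub, eval_X] at h1 ⊢
    rw [hρdef]
    simp only [eval_mul, eval_C, eval_sub]
    field_simp
    linarith [h1]
  have hρdeg : ρ.natDegree ≤ 3 := by
    calc ρ.natDegree ≤ (p - C A0).natDegree := natDegree_C_mul_le _ _
    _ ≤ max p.natDegree (C A0).natDegree := natDegree_sub_le _ _
    _ ≤ 3 := by simp [hpdeg]
  have hρnc : ρ.natDegree ≠ 0 := by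
    intro h0
    have hρC : ρ = C (ρ.coeff 0) := eq_C_of_natDegree_eq_zero h0
    have hsq : ∀ t ∈ Icc a b, (γ t - m)^2 = ρ.coeff 0 := by
      intro t ht; rw [hρ t ht, hρC]; simp
    have hsa := hsq a ⟨le_rfl, hab.le⟩
    have hsb := hsq b ⟨hab.le, le_rfl⟩
    have hprod : (γ a - m - (γ b - m)) * (γ a - m + (γ b - m)) = 0 := by nlinarith
    have hsum : γ a - m + (γ b - m) = 0 := by
      rcases mul_eq_zero.mp hprod with h | h
      · exfalso; have hne2 : γ a ≠ γ b := ne_of_lt hne; apply hne2; linarith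
      · exact h
    have hfa : γ a - m < 0 := by
      rcases lt_trichotomy (γ a - m) 0 with h | h | h
      · exact h
      · exfalso; have : γ b - m = 0 := by linarith
        have : γ a = γ b := by linarith
        exact (ne_of_lt hne) this
      · exfalso; have : γ b - m < 0 := by linarith
        have : γ b < γ a := by linarith
        linarith
    have hfb : 0 < γ b - m := by linarith
    have hivt : (0:ℝ) ∈ (fun t => γ t - m) '' Icc a b := by
      apply intermediate_value_Icc hab.le (hcont.sub continuousOn_const)
      constructor <;> simp <;> linarith
    obtain ⟨ts, hts, hval⟩ := hivt
    have h0' : ρ.coeff 0 = 0 := by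
      have h3 := hsq ts hts
      simp only at hval
      rw [hval] at h3
      simpa using h3.symm
    rw [h0'] at hsb
    nlinarith
  set B0 : ℝ := v.eval m with hB0def
  set B1 : ℝ := (taylor m v).coeff 1 with hB1def
  set B2 : ℝ := (taylor m v).coeff 2 with hB2def
  set B3 : ℝ := (taylor m v).coeff 3 with hB3def
  have hvrep : v = C B0 + C B1 * (X - C m) + C B2 * (X - C m)^2 + C B3 * (X - C m)^3 :=
    cubicTaylor v hvdeg m
  set G : Polynomial ℝ := C B1 + C B3 * ρ with hGdef
  set S : Polynomial ℝ := pv - C B0 - C B2 * ρ with hSdef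
  have hGS : ∀ t ∈ Icc a b, G.eval t * (γ t - m) = S.eval t := by
    intro t ht
    have hveq := hv t ht
    rw [hvrep] at hveq
    simp only [eval_add, eval_mul, eval_C, eval_pow, eval_sub, eval_X] at hveq
    have hφ2 := hρ t ht
    rw [hGdef, hSdef]
    simp only [eval_add, eval_mul, eval_C, eval_sub]
    linear_combination hveq + (-B2 - B3*(γ t - m)) * hφ2
  have hG0 : G ≠ 0 := by
    intro h0
    by_cases hB3z : B3 = 0
    · have hB1z : B1 = 0 := by
        rw [hGdef, hB3z] at h0
        simpa using h0
      apply hindep ((A2*B0 - B2*A0)/A2) (B2/A2)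
      apply mul_left_cancel₀ (show (C A2 : Polynomial ℝ) ≠ 0 by simpa using hA2)
      have e1 : A2 * ((A2*B0 - B2*A0)/A2) = A2*B0 - B2*A0 := by field_simp
      have e2 : A2 * (B2/A2) = B2 := by field_simp
      have hRHS : C A2 * (C ((A2*B0 - B2*A0)/A2) + C (B2/A2) * u)
          = C (A2*B0 - B2*A0) + C B2 * u := by
        rw [mul_add, ← C_mul, e1, ← mul_assoc, ← C_mul, e2]
      have hLHS : C A2 * v = C (A2*B0 - B2*A0) + C B2 * u := by
        rw [hvrep, hB1z, hB3z, hurep]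
        simp only [C_0, zero_mul, mul_zero, add_zero, zero_add, C_sub, C_mul]
        ring
      rw [hLHS, hRHS]
    · apply hρnc
      have h1 : C B3 * ρ = -C B1 := by linear_combination h0
      have h2 : ρ = C (-B1/B3) := by
        have h3 : C (1/B3) * (C B3 * ρ) = C (1/B3) * (-C B1) := by rw [h1]
        rw [← mul_assoc, ← C_mul, one_div_mul_cancel hB3z, C_1, one_mul] at h3
        rw [h3, ← C_neg, ← C_mul]
        congr 1
        field_simp
      rw [h2]
      simp
  have hsqpoly : S^2 = G^2 * ρ := by
    apply polyEq hab
    intro t ht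
    have h1 := hGS t ht
    have h2 := hρ t ht
    simp only [eval_pow, eval_mul]
    linear_combination (-(S.eval t) - G.eval t * (γ t - m)) * h1 + (G.eval t)^2 * h2
  have hdvd : G ∣ S := by
    have h2 : G^2 ∣ S^2 := ⟨ρ, hsqpoly⟩
    exact (IsIntegrallyClosed.pow_dvd_pow_iff (by norm_num : (2:ℕ) ≠ 0)).mp h2
  obtain ⟨H, hSH⟩ := hdvd
  have hρH : ρ = H^2 := by
    have hq : G^2 * ρ = G^2 * H^2 := by rw [← hsqpoly, hSH]; ring
    exact mul_left_cancel₀ (pow_ne_zero 2 hG0) hq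
  have hHdeg : H.natDegree = 1 := by
    have h2 : ρ.natDegree = 2 * H.natDegree := by rw [hρH, natDegree_pow]
    omega
  have hH0 : H ≠ 0 := fun h => by simp [h] at hHdeg
  have hc1 : H.coeff 1 ≠ 0 := by
    have := leadingCoeff_ne_zero.mpr hH0
    rwa [leadingCoeff, hHdeg] at this
  set c1 : ℝ := H.coeff 1 with hc1def
  set t₀ : ℝ := -(H.coeff 0)/c1 with ht₀def
  have hHeval : ∀ t : ℝ, H.eval t = c1 * (t - t₀) := by
    intro t
    conv_lhs => rw [eq_X_add_C_of_natDegree_le_one hHdeg.le]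
    simp only [eval_add, eval_mul, eval_C, eval_X]
    rw [ht₀def]
    field_simp
    ring
  have hbranch : ∀ t ∈ Icc a b, γ t - m = c1*(t - t₀) ∨ γ t - m = -(c1*(t - t₀)) := by
    intro t ht
    have h2 : (γ t - m)^2 = (H.eval t)^2 := by
      rw [hρ t ht, hρH]; simp [eval_pow]
    rw [hHeval] at h2
    have h3 : ((γ t - m) - c1*(t - t₀)) * ((γ t - m) + c1*(t - t₀)) = 0 := by nlinarith
    rcases mul_eq_zero.mp h3 with h | h
    · left; linarith
    · right; linarith
  have hφmono : MonotoneOn (fun t => γ t - m) (Icc a b) := by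
    intro x hx y hy hxy
    simp only
    linarith [hmono hx hy hxy]
  have hφcont : ContinuousOn (fun t => γ t - m) (Icc a b) := hcont.sub continuousOn_const
  rcases signLemma hab hφmono hφcont hc1 hbranch with hL | hR
  · refine ⟨c1, m - c1*t₀, fun t ht => ?_⟩
    have := hL t ht
    linear_combination this
  · refine ⟨-c1, m + c1*t₀, fun t ht => ?_⟩
    have := hR t ht
    linear_combination this

private lemma degNe {u v : Polynomial ℝ} (h : v.natDegree < u.natDegree) :
    ∀ x y : ℝ, u ≠ C x + C y * v := by
  intro x y heq
  have h1 : u.natDegree ≤ max (C x).natDegree (C y * v).natDegree :=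
    heq ▸ natDegree_add_le _ _
  have h2 : (C y * v).natDegree ≤ v.natDegree := natDegree_C_mul_le _ _
  simp only [natDegree_C] at h1
  omega

private lemma affineDep {u v : Polynomial ℝ} (hu : u.natDegree = 1) (hv : v.natDegree ≤ 1) :
    ∃ x y : ℝ, v = C x + C y * u := by
  have hu0 : u ≠ 0 := fun h => by simp [h] at hu
  have hu1 : u.coeff 1 ≠ 0 := by
    have := leadingCoeff_ne_zero.mpr hu0
    rwa [leadingCoeff, hu] at this
  set u1 := u.coeff 1 with hu1def
  set u0 := u.coeff 0 with hu0def
  set v1 := v.coeff 1 with hv1def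
  set v0 := v.coeff 0 with hv0def
  refine ⟨v0 - (v1/u1)*u0, v1/u1, ?_⟩
  have hurep : u = C u1 * X + C u0 := eq_X_add_C_of_natDegree_le_one hu.le
  have hvrep : v = C v1 * X + C v0 := eq_X_add_C_of_natDegree_le_one hv
  have e1 : C (v1/u1) * C u1 = C v1 := by
    rw [← C_mul, div_mul_cancel₀ _ hu1]
  rw [hvrep, hurep]
  simp only [C_sub, C_mul]
  rw [← e1]
  ring

private lemma localAffine {d : ℕ} (hd : 2 ≤ d) {Q P : ℝ → EuclideanSpace ℝ (Fin d)}
    {γ : ℝ → ℝ} {a b α β : ℝ} {lP lQ : ℕ}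
    (hab : a < b) (hlP : lP ≤ 3) (hlQ : lQ ≤ 3)
    (hmono : MonotoneOn γ (Icc a b)) (hcont : ContinuousOn γ (Icc a b))
    (hmaps : ∀ t ∈ Icc a b, γ t ∈ Icc α β)
    (hnl : ¬ ∃ (av v : EuclideanSpace ℝ (Fin d)), v ≠ 0 ∧
      ∀ s ∈ Icc α β, ∃ c : ℝ, Q s = av + c • v)
    (hQp : ∀ i : Fin d, ∃ g : Polynomial ℝ, g.natDegree ≤ lQ ∧ ∀ s ∈ Icc α β, Q s i = g.eval s)
    (hPp : ∀ i : Fin d, ∃ f : Polynomial ℝ, f.natDegree ≤ lP ∧ ∀ t ∈ Icc a b, P t i = f.eval t)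
    (hPQ : ∀ t ∈ Icc a b, P t = Q (γ t)) :
    ∃ σ c₀ : ℝ, ∀ t ∈ Icc a b, γ t = σ * t + c₀ := by
  have hmemab : ∀ t ∈ Icc a b, t ∈ Icc a b := fun t ht => ht
  rcases eq_or_lt_of_le (hmono ⟨le_rfl, hab.le⟩ ⟨hab.le, le_rfl⟩ hab.le) with hconst | hne
  · refine ⟨0, γ a, fun t ht => ?_⟩
    have h1 : γ a ≤ γ t := hmono ⟨le_rfl, hab.le⟩ ht ht.1
    have h2 : γ t ≤ γ b := hmono ht ⟨hab.le, le_rfl⟩ ht.2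
    rw [zero_mul, zero_add]
    linarith [hconst]
  choose g hgdeg hgQ using hQp
  choose f hfdeg hfP using hPp
  have hW : ∀ i, ∀ t ∈ Icc a b, (g i).eval (γ t) = (f i).eval t := by
    intro i t ht
    rw [← hgQ i (γ t) (hmaps t ht), ← hPQ t ht, hfP i t ht]
  obtain ⟨i, j, hdi, hij⟩ := indepPair hd hnl g (fun i s hs => hgQ i s hs)
  have hdu3 : (g i).natDegree ≤ 3 := le_trans (hgdeg i) hlQ
  have hdv3 : (g j).natDegree ≤ 3 := le_trans (hgdeg j) hlQ
  have hfp3 : ∀ k, (f k).natDegree ≤ 3 := fun k => le_trans (hfdeg k) hlP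
  -- dispatch on the degree of u := g i
  interval_cases hdu : (g i).natDegree
  · -- degree 1 : case A with ℓ = g i, provided deg (g j) ≥ 2
    have hdv2 : 2 ≤ (g j).natDegree := by
      by_contra hcon
      push_neg at hcon
      obtain ⟨x, y, hxy⟩ := affineDep (v := g j) hdu (by omega)
      exact hij x y hxy
    exact caseA hab hdu hdv2 (hfp3 i) (hfp3 j) (hW i) (hW j)
  · -- degree 2 : case B with u = g i, v = g j
    exact caseB hab hmono hcont hne hdu hdv3 (hfp3 i) (hfp3 j) hij (hW i) (hW j)
  · -- degree 3
    have hdu3 : (g i).natDegree ≤ 3 := le_of_eq hdu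
    rcases Nat.lt_or_ge (g j).natDegree 3 with hdv | hdv
    · rcases Nat.lt_or_ge (g j).natDegree 2 with hdv1 | hdv2
      · -- deg v ≤ 1
        rcases Nat.eq_zero_or_pos (g j).natDegree with hdv0 | hdvpos
        · exfalso
          apply hij ((g j).coeff 0) 0
          rw [eq_C_of_natDegree_eq_zero hdv0]
          simp
        · -- deg v = 1 : case A with ℓ = g j, w = g i
          exact caseA hab (by omega) (by omega) (hfp3 j) (hfp3 i) (hW j) (hW i)
      · -- deg v = 2 : case B with u₂ = g j, companion g i
        exact caseB hab hmono hcont hne (by omega) hdu3 (hfp3 j) (hfp3 i)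
          (degNe (by omega)) (hW j) (hW i)
    · -- deg v = 3 : eliminate the cubic term
      have hdv3' : (g j).natDegree = 3 := le_antisymm hdv3 hdv
      have hui0 : g i ≠ 0 := fun h => by simp [h] at hdu
      have hci3 : (g i).coeff 3 ≠ 0 := by
        have := leadingCoeff_ne_zero.mpr hui0
        rwa [leadingCoeff, hdu] at this
      set lam : ℝ := (g j).coeff 3 / (g i).coeff 3 with hlamdef
      set w : Polynomial ℝ := g j - C lam * g i with hwdef
      set pw : Polynomial ℝ := f j - C lam * f i with hpwdef
      have hWw : ∀ t ∈ Icc a b, w.eval (γ t) = pw.eval t := by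
        intro t ht
        rw [hwdef, hpwdef]
        simp only [eval_sub, eval_mul, eval_C]
        rw [hW i t ht, hW j t ht]
      have hpwdeg : pw.natDegree ≤ 3 := by
        calc pw.natDegree ≤ max (f j).natDegree (C lam * f i).natDegree :=
              natDegree_sub_le _ _
        _ ≤ 3 := by
            have := natDegree_C_mul_le lam (f i)
            have := hfp3 i; have := hfp3 j
            omega
      have hwdeg : w.natDegree ≤ 2 := by
        apply natDegree_le_iff_coeff_eq_zero.mpr
        intro N hN
        rw [hwdef]
        simp only [coeff_sub, coeff_C_mul]
        rcases Nat.lt_or_ge 3 N with h3 | h3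
        · rw [coeff_eq_zero_of_natDegree_lt (lt_of_le_of_lt hdv3 h3),
            coeff_eq_zero_of_natDegree_lt (lt_of_le_of_lt hdu3 h3)]
          ring
        · have hN3 : N = 3 := by omega
          rw [hN3, hlamdef]
          field_simp
          simp
      have hw0 : w.natDegree ≠ 0 := by
        intro h0
        apply hij (w.coeff 0) lam
        have : w = C (w.coeff 0) := eq_C_of_natDegree_eq_zero h0
        rw [hwdef] at this
        linear_combination this
      rcases Nat.lt_or_ge w.natDegree 2 with hw1 | hw2
      · -- deg w = 1 : case A with ℓ = w, w' = g i
        exact caseA hab (by omega) (by omega) hpwdeg (hfp3 i) hWw (hW i)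
      · -- deg w = 2 : case B with u₂ = w, companion g i
        exact caseB hab hmono hcont hne (by omega) hdu3 hpwdeg (hfp3 i)
          (degNe (by omega)) hWw (hW i)

private lemma knotMono {K : ℕ} {κ : ℕ → ℝ} (hκ : ∀ k < K, κ k < κ (k+1)) :
    ∀ j k, j ≤ k → k ≤ K → κ j ≤ κ k := by
  intro j k hjk hkK
  induction k with
  | zero => rw [Nat.le_zero.mp hjk]
  | succ n ih =>
    rcases Nat.lt_or_ge j (n+1) with h | h
    · have h1 : κ j ≤ κ n := ih (by omega) (by omega)
      have h2 : κ n < κ (n+1) := hκ n (by omega)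
      linarith
    · have : j = n+1 := by omega
      rw [this]

private lemma knotRange {K : ℕ} {κ : ℕ → ℝ} (hκ : ∀ k < K, κ k < κ (k+1))
    (hκ0 : κ 0 = 0) (hκK : κ K = 1) {k : ℕ} (hk : k < K) :
    Icc (κ k) (κ (k+1)) ⊆ Icc (0:ℝ) 1 := by
  intro x hx
  have h1 : κ 0 ≤ κ k := knotMono hκ 0 k (by omega) (by omega)
  have h2 : κ (k+1) ≤ κ K := knotMono hκ (k+1) K (by omega) (by omega)
  rw [hκ0] at h1; rw [hκK] at h2
  exact ⟨le_trans h1 hx.1, le_trans hx.2 h2⟩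

/-- In a cusp (all first taylor coefficients vanish), some second taylor
coefficient is nonzero. -/
private lemma cusp2 {d : ℕ} (hd : 2 ≤ d) {Q : ℝ → EuclideanSpace ℝ (Fin d)} {α β c : ℝ}
    (hnl : ¬ ∃ (a v : EuclideanSpace ℝ (Fin d)), v ≠ 0 ∧
      ∀ s ∈ Icc α β, ∃ cc : ℝ, Q s = a + cc • v)
    (q : Fin d → Polynomial ℝ) (hqdeg : ∀ i, (q i).natDegree ≤ 3)
    (hq : ∀ i, ∀ s ∈ Icc α β, Q s i = (q i).eval s)
    (hc1 : ∀ i, (taylor c (q i)).coeff 1 = 0) :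
    ∃ i, (taylor c (q i)).coeff 2 ≠ 0 := by
  by_contra hcon
  push_neg at hcon
  apply lineExcl hd hnl (fun i => (q i).eval c) (fun i => (taylor c (q i)).coeff 3)
    (fun s => (s - c)^3)
  intro s hs i
  rw [hq i s hs]
  conv_lhs => rw [cubicTaylor (q i) (hqdeg i) c]
  rw [hc1 i, hcon i]
  simp

private lemma cusp3 {d : ℕ} (hd : 2 ≤ d) {Q : ℝ → EuclideanSpace ℝ (Fin d)} {α β c : ℝ}
    (hnl : ¬ ∃ (a v : EuclideanSpace ℝ (Fin d)), v ≠ 0 ∧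
      ∀ s ∈ Icc α β, ∃ cc : ℝ, Q s = a + cc • v)
    (q : Fin d → Polynomial ℝ) (hqdeg : ∀ i, (q i).natDegree ≤ 3)
    (hq : ∀ i, ∀ s ∈ Icc α β, Q s i = (q i).eval s)
    (hc1 : ∀ i, (taylor c (q i)).coeff 1 = 0) :
    ∃ i, (taylor c (q i)).coeff 3 ≠ 0 := by
  by_contra hcon
  push_neg at hcon
  apply lineExcl hd hnl (fun i => (q i).eval c) (fun i => (taylor c (q i)).coeff 2)
    (fun s => (s - c)^2)
  intro s hs i
  rw [hq i s hs]
  conv_lhs => rw [cubicTaylor (q i) (hqdeg i) c]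
  rw [hc1 i, hcon i]
  simp

private lemma compDerivEval (q : Polynomial ℝ) (σ β t : ℝ) :
    (q.comp (C σ * X + C β)).derivative.eval t = σ * q.derivative.eval (σ*t + β) := by
  rw [derivative_comp]
  have h1 : (C σ * X + C β : Polynomial ℝ).derivative = C σ := by simp
  rw [h1]
  simp [eval_comp]

private lemma compDeriv2Eval (q : Polynomial ℝ) (σ β t : ℝ) :
    (q.comp (C σ * X + C β)).derivative.derivative.eval t
      = σ^2 * q.derivative.derivative.eval (σ*t + β) := by
  rw [derivative_comp]
  have h1 : (C σ * X + C β : Polynomial ℝ).derivative = C σ := by simp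
  rw [h1, derivative_mul, derivative_C, zero_mul, derivative_comp, h1]
  simp [eval_comp]
  ring

private lemma deriv2_taylor (q : Polynomial ℝ) (hq : q.natDegree ≤ 3) (c : ℝ) :
    q.derivative.derivative.eval c = 2 * (taylor c q).coeff 2 := by
  conv_lhs => rw [cubicTaylor q hq c]
  rw [repDeriv2Eval]

private lemma slopeMatch {d : ℕ} (hd : 2 ≤ d) {lQ lP : ℕ}
    (hlQ : lQ = 2 ∨ lQ = 3) (hlP : lP = 2 ∨ lP = 3)
    {Q P : ℝ → EuclideanSpace ℝ (Fin d)} {K : ℕ} {κ : ℕ → ℝ}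
    (hκ : ∀ k < K, κ k < κ (k+1)) (hκ0 : κ 0 = 0) (hκK : κ K = 1)
    (hQpoly : ∀ k < K, ∀ i : Fin d, ∃ f : Polynomial ℝ, f.natDegree ≤ lQ ∧
      ∀ t ∈ Icc (κ k) (κ (k + 1)), Q t i = f.eval t)
    (hQsmooth : ContDiffOn ℝ (↑(lQ - 1) : ℕ∞) Q (Icc (0:ℝ) 1))
    (hQnonlin : ∀ k < K, ¬ ∃ (a v : EuclideanSpace ℝ (Fin d)), v ≠ 0 ∧
      ∀ t ∈ Icc (κ k) (κ (k + 1)), ∃ c : ℝ, Q t = a + c • v)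
    (hPsmooth : ContDiffOn ℝ (↑(lP - 1) : ℕ∞) P (Icc (0:ℝ) 1))
    {γ : ℝ → ℝ} {a tm b : ℝ} (hat : a < tm) (htb : tm < b) (ha0 : 0 ≤ a) (hb1 : b ≤ 1)
    {σ₁ β₁ σ₂ β₂ : ℝ} (hσ₁0 : 0 ≤ σ₁) (hσ₂0 : 0 ≤ σ₂)
    (hγ₁ : ∀ t ∈ Icc a tm, γ t = σ₁*t + β₁) (hγ₂ : ∀ t ∈ Icc tm b, γ t = σ₂*t + β₂)
    {k₁ k₂ : ℕ} (hk₁ : k₁ < K) (hk₂ : k₂ < K)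
    (hγk₁ : ∀ t ∈ Icc a tm, γ t ∈ Icc (κ k₁) (κ (k₁+1)))
    (hγk₂ : ∀ t ∈ Icc tm b, γ t ∈ Icc (κ k₂) (κ (k₂+1)))
    (hf₁ : ∀ i : Fin d, ∃ f : Polynomial ℝ, f.natDegree ≤ lP ∧
      ∀ t ∈ Icc a tm, P t i = f.eval t)
    (hf₂ : ∀ i : Fin d, ∃ f : Polynomial ℝ, f.natDegree ≤ lP ∧
      ∀ t ∈ Icc tm b, P t i = f.eval t)
    (hPQ : ∀ t ∈ Icc (0:ℝ) 1, P t = Q (γ t)) :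
    σ₁ = σ₂ := by
  have hlQ3 : lQ ≤ 3 := by rcases hlQ with h | h <;> omega
  have hlP3 : lP ≤ 3 := by rcases hlP with h | h <;> omega
  set c : ℝ := γ tm with hcdef
  have htmm₁ : tm ∈ Icc a tm := ⟨hat.le, le_rfl⟩
  have htmm₂ : tm ∈ Icc tm b := ⟨le_rfl, htb.le⟩
  have hc₁ : c ∈ Icc (κ k₁) (κ (k₁+1)) := hγk₁ tm htmm₁
  have hc₂ : c ∈ Icc (κ k₂) (κ (k₂+1)) := hγk₂ tm htmm₂
  have hctm1 : c = σ₁*tm + β₁ := hγ₁ tm htmm₁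
  have hctm2 : c = σ₂*tm + β₂ := hγ₂ tm htmm₂
  choose q₁ hq₁deg hq₁ using hQpoly k₁ hk₁
  choose q₂ hq₂deg hq₂ using hQpoly k₂ hk₂
  have hq₁deg3 : ∀ i, (q₁ i).natDegree ≤ 3 := fun i => le_trans (hq₁deg i) hlQ3
  have hq₂deg3 : ∀ i, (q₂ i).natDegree ≤ 3 := fun i => le_trans (hq₂deg i) hlQ3
  have hsub₁ : Icc a tm ⊆ Icc (0:ℝ) 1 :=
    Icc_subset_Icc ha0 (le_trans htb.le hb1)
  have hsub₂ : Icc tm b ⊆ Icc (0:ℝ) 1 :=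
    Icc_subset_Icc (le_trans ha0 hat.le) hb1
  have hIk₁ : Icc (κ k₁) (κ (k₁+1)) ⊆ Icc (0:ℝ) 1 := knotRange hκ hκ0 hκK hk₁
  have hIk₂ : Icc (κ k₂) (κ (k₂+1)) ⊆ Icc (0:ℝ) 1 := knotRange hκ hκ0 hκK hk₂
  set F₁ : Fin d → Polynomial ℝ := fun i => (q₁ i).comp (C σ₁ * X + C β₁) with hF₁def
  set F₂ : Fin d → Polynomial ℝ := fun i => (q₂ i).comp (C σ₂ * X + C β₂) with hF₂def
  have hPF₁ : ∀ i, ∀ t ∈ Icc a tm, P t i = (F₁ i).eval t := by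
    intro i t ht
    rw [hPQ t (hsub₁ ht), hq₁ i (γ t) (hγk₁ t ht), hγ₁ t ht, hF₁def]
    simp [eval_comp]
  have hPF₂ : ∀ i, ∀ t ∈ Icc tm b, P t i = (F₂ i).eval t := by
    intro i t ht
    rw [hPQ t (hsub₂ ht), hq₂ i (γ t) (hγk₂ t ht), hγ₂ t ht, hF₂def]
    simp [eval_comp]
  -- first-order data
  have hQ1 : ∀ i : Fin d, ContDiffOn ℝ 1 (fun s => Q s i) (Icc (0:ℝ) 1) := by
    intro i
    apply (contDiffOnComp hQsmooth i).of_le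
    rcases hlQ with h | h <;> rw [h] <;> norm_num
  have hP1 : ∀ i : Fin d, ContDiffOn ℝ 1 (fun t => P t i) (Icc (0:ℝ) 1) := by
    intro i
    apply (contDiffOnComp hPsmooth i).of_le
    rcases hlP with h | h <;> rw [h] <;> norm_num
  have hD : ∀ i, (q₁ i).derivative.eval c = (q₂ i).derivative.eval c := by
    intro i
    exact derivMatch₂ (hκ k₁ hk₁) (hκ k₂ hk₂) hc₁ hc₂ hIk₁ hIk₂
      (fun s hs => hq₁ i s hs) (fun s hs => hq₂ i s hs) (hQ1 i)
  have hPd : ∀ i, σ₁ * (q₁ i).derivative.eval c = σ₂ * (q₂ i).derivative.eval c := by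
    intro i
    have h := derivMatch₂ hat htb htmm₁ htmm₂ hsub₁ hsub₂ (hPF₁ i) (hPF₂ i) (hP1 i)
    rw [hF₁def, hF₂def] at h
    simp only [compDerivEval] at h
    rw [← hctm1, ← hctm2] at h
    exact h
  by_cases hcusp : ∃ i, (q₂ i).derivative.eval c ≠ 0
  · obtain ⟨i0, hi0⟩ := hcusp
    have h1 := hPd i0
    rw [hD i0] at h1
    exact mul_right_cancel₀ hi0 h1
  -- cusp case
  push_neg at hcusp
  have hcusp₁ : ∀ i, (q₁ i).derivative.eval c = 0 := fun i => (hD i).trans (hcusp i)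
  by_cases hσboth : σ₁ = 0 ∧ σ₂ = 0
  · rw [hσboth.1, hσboth.2]
  have hσ : σ₁ ≠ 0 ∨ σ₂ ≠ 0 := by
    by_contra hcon
    push_neg at hcon
    exact hσboth ⟨hcon.1, hcon.2⟩
  have hT1₂ : ∀ i, (taylor c (q₂ i)).coeff 1 = 0 := by
    intro i; rw [taylor_coeff_one]; exact hcusp i
  have hT1₁ : ∀ i, (taylor c (q₁ i)).coeff 1 = 0 := by
    intro i; rw [taylor_coeff_one]; exact hcusp₁ i
  -- lQ must be 3
  have hlQ3' : lQ = 3 := by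
    rcases hlQ with h2 | h3
    · exfalso
      obtain ⟨i, hi⟩ := cusp3 hd (hQnonlin k₂ hk₂) q₂ hq₂deg3 (fun i s hs => hq₂ i s hs) hT1₂
      apply hi
      apply coeff_eq_zero_of_natDegree_lt
      rw [natDegree_taylor]
      have := hq₂deg i
      omega
    · exact h3
  -- Q is C²
  have hQ2 : ∀ i : Fin d, ContDiffOn ℝ 2 (fun s => Q s i) (Icc (0:ℝ) 1) := by
    intro i
    apply (contDiffOnComp hQsmooth i).of_le
    rw [hlQ3']; norm_num
  have hD2 : ∀ i, (q₁ i).derivative.derivative.eval c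
      = (q₂ i).derivative.derivative.eval c := by
    intro i
    exact deriv2Match₂ (hκ k₁ hk₁) (hκ k₂ hk₂) hc₁ hc₂ hIk₁ hIk₂
      (fun s hs => hq₁ i s hs) (fun s hs => hq₂ i s hs) (hQ2 i)
  -- lP must be 3
  have hlP3' : lP = 3 := by
    rcases hlP with h2 | h3
    · exfalso
      rcases hσ with hσ1 | hσ2
      · obtain ⟨i1, hi1⟩ := cusp3 hd (hQnonlin k₁ hk₁) q₁ hq₁deg3 (fun i s hs => hq₁ i s hs) hT1₁
        have hdeg3 : (q₁ i1).natDegree = 3 := by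
          have h1 : 3 ≤ (taylor c (q₁ i1)).natDegree := le_natDegree_of_ne_zero hi1
          rw [natDegree_taylor] at h1
          have := hq₁deg3 i1
          omega
        have hFdeg : (F₁ i1).natDegree = 3 := by
          rw [hF₁def]
          simp only
          rw [natDegree_comp, natDegree_linear hσ1, hdeg3, mul_one]
        obtain ⟨f, hfdeg, hfP⟩ := hf₁ i1
        have heq : F₁ i1 = f := by
          apply polyEq hat
          intro t ht
          rw [← hPF₁ i1 t ht, hfP t ht]
        rw [heq] at hFdeg
        omega
      · obtain ⟨i1, hi1⟩ := cusp3 hd (hQnonlin k₂ hk₂) q₂ hq₂deg3 (fun i s hs => hq₂ i s hs) hT1₂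
        have hdeg3 : (q₂ i1).natDegree = 3 := by
          have h1 : 3 ≤ (taylor c (q₂ i1)).natDegree := le_natDegree_of_ne_zero hi1
          rw [natDegree_taylor] at h1
          have := hq₂deg3 i1
          omega
        have hFdeg : (F₂ i1).natDegree = 3 := by
          rw [hF₂def]
          simp only
          rw [natDegree_comp, natDegree_linear hσ2, hdeg3, mul_one]
        obtain ⟨f, hfdeg, hfP⟩ := hf₂ i1
        have heq : F₂ i1 = f := by
          apply polyEq htb
          intro t ht
          rw [← hPF₂ i1 t ht, hfP t ht]
        rw [heq] at hFdeg
        omega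
    · exact h3
  have hP2 : ∀ i : Fin d, ContDiffOn ℝ 2 (fun t => P t i) (Icc (0:ℝ) 1) := by
    intro i
    apply (contDiffOnComp hPsmooth i).of_le
    rw [hlP3']; norm_num
  have hP2d : ∀ i, σ₁^2 * (q₁ i).derivative.derivative.eval c
      = σ₂^2 * (q₂ i).derivative.derivative.eval c := by
    intro i
    have h := deriv2Match₂ hat htb htmm₁ htmm₂ hsub₁ hsub₂ (hPF₁ i) (hPF₂ i) (hP2 i)
    rw [hF₁def, hF₂def] at h
    simp only [compDeriv2Eval] at h
    rw [← hctm1, ← hctm2] at h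
    exact h
  obtain ⟨i0, hi0⟩ := cusp2 hd (hQnonlin k₂ hk₂) q₂ hq₂deg3 (fun i s hs => hq₂ i s hs) hT1₂
  have hE : (q₂ i0).derivative.derivative.eval c ≠ 0 := by
    rw [deriv2_taylor _ (hq₂deg3 i0) c]
    intro h
    apply hi0
    linarith [h]
  have hkey := hP2d i0
  rw [hD2 i0] at hkey
  have hsq : σ₁^2 = σ₂^2 := mul_right_cancel₀ hE hkey
  nlinarith [hsq, hσ₁0, hσ₂0]

private lemma sideLeft {γ : ℝ → ℝ} (hmono : MonotoneOn γ (Icc 0 1))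
    (hcont : ContinuousOn γ (Icc 0 1)) (hmaps : MapsTo γ (Icc 0 1) (Icc 0 1))
    {K : ℕ} {κ : ℕ → ℝ} (hK : 1 ≤ K) (hκ : ∀ k < K, κ k < κ (k+1))
    (hκ0 : κ 0 = 0) (hκK : κ K = 1) {t : ℝ} (ht : 0 < t) (ht1 : t ≤ 1) :
    ∃ k < K, ∃ a, 0 ≤ a ∧ a < t ∧ ∀ s ∈ Icc a t, γ s ∈ Icc (κ k) (κ (k+1)) := by
  have htm : t ∈ Icc (0:ℝ) 1 := ⟨ht.le, ht1⟩
  set c : ℝ := γ t with hcdef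
  have hc01 : c ∈ Icc (0:ℝ) 1 := hmaps htm
  by_cases hflat : ∃ a', 0 ≤ a' ∧ a' < t ∧ γ a' = c
  · obtain ⟨a', ha'0, ha't, ha'c⟩ := hflat
    obtain ⟨k, hk, hk1, hk2⟩ := knotLoc hK hκ hκ0 hκK hc01.1 hc01.2
    refine ⟨k, hk, a', ha'0, ha't, fun s hs => ?_⟩
    have hs01 : s ∈ Icc (0:ℝ) 1 := ⟨le_trans ha'0 hs.1, le_trans hs.2 ht1⟩
    have h1 : γ a' ≤ γ s := hmono ⟨ha'0, le_trans ha't.le ht1⟩ hs01 hs.1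
    have h2 : γ s ≤ γ t := hmono hs01 htm hs.2
    have : γ s = c := le_antisymm h2 (ha'c ▸ h1)
    rw [this]; exact ⟨hk1, hk2⟩
  · push_neg at hflat
    have hlt : ∀ s, 0 ≤ s → s < t → γ s < c := by
      intro s h0 hst
      exact lt_of_le_of_ne
        (hmono ⟨h0, le_trans hst.le ht1⟩ htm hst.le) (hflat s h0 hst)
    have hcpos : 0 < c := lt_of_le_of_lt (hmaps (by simp : (0:ℝ) ∈ Icc (0:ℝ) 1)).1
      (hlt 0 le_rfl ht)
    obtain ⟨k, hk, hkc, hck⟩ := knotLoc_lt hκ hκ0 hκK hcpos hc01.2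
    have hcw : ContinuousWithinAt γ (Icc 0 1) t := hcont t htm
    have hev : ∀ᶠ s in 𝓝[Icc (0:ℝ) 1] t, κ k < γ s :=
      hcw.eventually (eventually_gt_nhds hkc)
    rw [eventually_nhdsWithin_iff] at hev
    rw [Metric.eventually_nhds_iff] at hev
    obtain ⟨ε, hε, hball⟩ := hev
    set a : ℝ := max 0 (t - ε/2) with hadef
    have ha0 : 0 ≤ a := le_max_left _ _
    have hat : a < t := by
      rw [hadef, max_lt_iff]
      exact ⟨ht, by linarith⟩
    refine ⟨k, hk, a, ha0, hat, fun s hs => ?_⟩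
    have hs01 : s ∈ Icc (0:ℝ) 1 := ⟨le_trans ha0 hs.1, le_trans hs.2 ht1⟩
    constructor
    · have hdist : dist s t < ε := by
        rw [Real.dist_eq, abs_lt]
        have h1 : t - ε/2 ≤ a := le_max_right _ _
        constructor <;> [linarith [hs.1, h1]; linarith [hs.2, hε]]
      exact (hball hdist hs01).le
    · have h2 : γ s ≤ γ t := hmono hs01 htm hs.2
      exact le_trans h2 hck

private lemma sideRight {γ : ℝ → ℝ} (hmono : MonotoneOn γ (Icc 0 1))
    (hcont : ContinuousOn γ (Icc 0 1)) (hmaps : MapsTo γ (Icc 0 1) (Icc 0 1))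
    {K : ℕ} {κ : ℕ → ℝ} (hK : 1 ≤ K) (hκ : ∀ k < K, κ k < κ (k+1))
    (hκ0 : κ 0 = 0) (hκK : κ K = 1) {t : ℝ} (ht : 0 ≤ t) (ht1 : t < 1) :
    ∃ k < K, ∃ b, b ≤ 1 ∧ t < b ∧ ∀ s ∈ Icc t b, γ s ∈ Icc (κ k) (κ (k+1)) := by
  have htm : t ∈ Icc (0:ℝ) 1 := ⟨ht, ht1.le⟩
  set c : ℝ := γ t with hcdef
  have hc01 : c ∈ Icc (0:ℝ) 1 := hmaps htm
  by_cases hflat : ∃ b', b' ≤ 1 ∧ t < b' ∧ γ b' = c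
  · obtain ⟨b', hb'1, htb', hb'c⟩ := hflat
    obtain ⟨k, hk, hk1, hk2⟩ := knotLoc hK hκ hκ0 hκK hc01.1 hc01.2
    refine ⟨k, hk, b', hb'1, htb', fun s hs => ?_⟩
    have hs01 : s ∈ Icc (0:ℝ) 1 := ⟨le_trans ht hs.1, le_trans hs.2 hb'1⟩
    have h1 : γ t ≤ γ s := hmono htm hs01 hs.1
    have h2 : γ s ≤ γ b' := hmono hs01 ⟨le_trans ht htb'.le, hb'1⟩ hs.2
    have : γ s = c := le_antisymm (hb'c ▸ h2) h1
    rw [this]; exact ⟨hk1, hk2⟩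
  · push_neg at hflat
    have hgt : ∀ s, s ≤ 1 → t < s → c < γ s := by
      intro s h1 hts
      exact lt_of_le_of_ne
        (hmono htm ⟨le_trans ht hts.le, h1⟩ hts.le) (Ne.symm (hflat s h1 hts))
    have hclt : c < 1 := lt_of_lt_of_le (hgt 1 le_rfl ht1)
      (hmaps (by simp : (1:ℝ) ∈ Icc (0:ℝ) 1)).2
    obtain ⟨k, hk, hkc, hck⟩ := knotLoc_le hκ hκ0 hκK hc01.1 hclt
    have hcw : ContinuousWithinAt γ (Icc 0 1) t := hcont t htm
    have hev : ∀ᶠ s in 𝓝[Icc (0:ℝ) 1] t, γ s < κ (k+1) :=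
      hcw.eventually (eventually_lt_nhds hck)
    rw [eventually_nhdsWithin_iff] at hev
    rw [Metric.eventually_nhds_iff] at hev
    obtain ⟨ε, hε, hball⟩ := hev
    set b : ℝ := min 1 (t + ε/2) with hbdef
    have hb1 : b ≤ 1 := min_le_left _ _
    have htb : t < b := by
      rw [hbdef, lt_min_iff]
      exact ⟨ht1, by linarith⟩
    refine ⟨k, hk, b, hb1, htb, fun s hs => ?_⟩
    have hs01 : s ∈ Icc (0:ℝ) 1 := ⟨le_trans ht hs.1, le_trans hs.2 hb1⟩
    constructor
    · have h2 : γ t ≤ γ s := hmono htm hs01 hs.1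
      exact le_trans hkc h2
    · have hdist : dist s t < ε := by
        rw [Real.dist_eq, abs_lt]
        have h1 : b ≤ t + ε/2 := min_le_right _ _
        constructor <;> [linarith [hs.1, hε]; linarith [hs.2, h1]]
      exact (hball hdist hs01).le

/-- Theorem 2 of the paper: identifiability of quadratic/cubic spline curves modulo
re-parametrisation. If `Q` is a spline curve of degree 2 or 3 whose image is non-linear
between consecutive knots, `P` is a spline curve of degree 2 or 3 (possibly with other
knots) and `P = Q ∘ γ` with `γ` monotone and onto, then `γ` is the identity. -/
theorem stmt_4 (d : ℕ) (hd : 2 ≤ d)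
    (lQ lP : ℕ) (hlQ : lQ = 2 ∨ lQ = 3) (hlP : lP = 2 ∨ lP = 3)
    (Q P : ℝ → EuclideanSpace ℝ (Fin d))
    (K : ℕ) (hK : 1 ≤ K) (κ : ℕ → ℝ)
    (hκ0 : κ 0 = 0) (hκK : κ K = 1) (hκ : ∀ k < K, κ k < κ (k + 1))
    (hQpoly : ∀ k < K, ∀ i : Fin d, ∃ f : Polynomial ℝ, f.natDegree ≤ lQ ∧
      ∀ t ∈ Icc (κ k) (κ (k + 1)), Q t i = f.eval t)
    (hQsmooth : ContDiffOn ℝ (↑(lQ - 1) : ℕ∞) Q (Icc (0:ℝ) 1))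
    (hQnonlin : ∀ k < K, ¬ ∃ (a v : EuclideanSpace ℝ (Fin d)), v ≠ 0 ∧
      ∀ t ∈ Icc (κ k) (κ (k + 1)), ∃ c : ℝ, Q t = a + c • v)
    (hP : ∃ (K' : ℕ) (κ' : ℕ → ℝ), 1 ≤ K' ∧ κ' 0 = 0 ∧ κ' K' = 1 ∧
      (∀ k < K', κ' k < κ' (k + 1)) ∧
      (∀ k < K', ∀ i : Fin d, ∃ f : Polynomial ℝ, f.natDegree ≤ lP ∧
        ∀ t ∈ Icc (κ' k) (κ' (k + 1)), P t i = f.eval t))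
    (hPsmooth : ContDiffOn ℝ (↑(lP - 1) : ℕ∞) P (Icc (0:ℝ) 1))
    (γ : ℝ → ℝ)
    (hγmono : MonotoneOn γ (Icc (0:ℝ) 1))
    (hγmaps : MapsTo γ (Icc (0:ℝ) 1) (Icc (0:ℝ) 1))
    (hγsurj : SurjOn γ (Icc (0:ℝ) 1) (Icc (0:ℝ) 1))
    (hPQ : ∀ t ∈ Icc (0:ℝ) 1, P t = Q (γ t)) :
    ∀ t ∈ Icc (0:ℝ) 1, γ t = t := by
  classical
  obtain ⟨K', κ', hK', hκ'0, hκ'K, hκ', hPpoly⟩ := hP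
  have hcont := gammaCont hγmono hγmaps hγsurj
  have hγ0 := gammaZero hγmono hγmaps hγsurj
  have hγ1 := gammaOne hγmono hγmaps hγsurj
  have hlQle : lQ ≤ 3 := by rcases hlQ with h | h <;> omega
  have hlPle : lP ≤ 3 := by rcases hlP with h | h <;> omega
  -- Step 1: local affinity around every interior point
  have hloc : ∀ t ∈ Ioo (0:ℝ) 1, ∃ a b : ℝ, 0 ≤ a ∧ a < t ∧ t < b ∧ b ≤ 1 ∧
      ∃ σ β : ℝ, ∀ s ∈ Icc a b, γ s = σ * s + β := by
    intro t ht
    obtain ⟨k₁, hk₁, a₀, ha₀0, ha₀t, hQside₁⟩ :=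
      sideLeft hγmono hcont hγmaps hK hκ hκ0 hκK ht.1 ht.2.le
    obtain ⟨j₁, hj₁, hj₁t, htj₁⟩ := knotLoc_lt hκ' hκ'0 hκ'K ht.1 ht.2.le
    set a : ℝ := max a₀ (κ' j₁) with hadef
    have ha0 : 0 ≤ a := le_trans ha₀0 (le_max_left _ _)
    have hat : a < t := max_lt ha₀t hj₁t
    have haP : Icc a t ⊆ Icc (κ' j₁) (κ' (j₁+1)) := fun s hs =>
      ⟨le_trans (le_max_right _ _) hs.1, le_trans hs.2 htj₁⟩
    have haQ : ∀ s ∈ Icc a t, γ s ∈ Icc (κ k₁) (κ (k₁+1)) := fun s hs =>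
      hQside₁ s ⟨le_trans (le_max_left _ _) hs.1, hs.2⟩
    obtain ⟨k₂, hk₂, b₀, hb₀1, htb₀, hQside₂⟩ :=
      sideRight hγmono hcont hγmaps hK hκ hκ0 hκK ht.1.le ht.2
    obtain ⟨j₂, hj₂, hj₂t, htj₂⟩ := knotLoc_le hκ' hκ'0 hκ'K ht.1.le ht.2
    set b : ℝ := min b₀ (κ' (j₂+1)) with hbdef
    have hb1 : b ≤ 1 := le_trans (min_le_left _ _) hb₀1
    have htb : t < b := lt_min htb₀ htj₂
    have hbP : Icc t b ⊆ Icc (κ' j₂) (κ' (j₂+1)) := fun s hs =>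
      ⟨le_trans hj₂t hs.1, le_trans hs.2 (min_le_right _ _)⟩
    have hbQ : ∀ s ∈ Icc t b, γ s ∈ Icc (κ k₂) (κ (k₂+1)) := fun s hs =>
      hQside₂ s ⟨hs.1, le_trans hs.2 (min_le_left _ _)⟩
    have hsubL : Icc a t ⊆ Icc (0:ℝ) 1 := Icc_subset_Icc ha0 ht.2.le
    have hsubR : Icc t b ⊆ Icc (0:ℝ) 1 := Icc_subset_Icc ht.1.le hb1
    have hfL : ∀ i : Fin d, ∃ f : Polynomial ℝ, f.natDegree ≤ lP ∧
        ∀ s ∈ Icc a t, P s i = f.eval s := by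
      intro i
      obtain ⟨f, h1, h2⟩ := hPpoly j₁ hj₁ i
      exact ⟨f, h1, fun s hs => h2 s (haP hs)⟩
    have hfR : ∀ i : Fin d, ∃ f : Polynomial ℝ, f.natDegree ≤ lP ∧
        ∀ s ∈ Icc t b, P s i = f.eval s := by
      intro i
      obtain ⟨f, h1, h2⟩ := hPpoly j₂ hj₂ i
      exact ⟨f, h1, fun s hs => h2 s (hbP hs)⟩
    obtain ⟨σ₁, β₁, hσ₁⟩ := localAffine hd hat hlPle hlQle (hγmono.mono hsubL)
      (hcont.mono hsubL) haQ (hQnonlin k₁ hk₁) (hQpoly k₁ hk₁) hfL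
      (fun s hs => hPQ s (hsubL hs))
    obtain ⟨σ₂, β₂, hσ₂⟩ := localAffine hd htb hlPle hlQle (hγmono.mono hsubR)
      (hcont.mono hsubR) hbQ (hQnonlin k₂ hk₂) (hQpoly k₂ hk₂) hfR
      (fun s hs => hPQ s (hsubR hs))
    have hσ₁0 : 0 ≤ σ₁ := by
      have h1 := hσ₁ a ⟨le_rfl, hat.le⟩
      have h2 := hσ₁ t ⟨hat.le, le_rfl⟩
      have h3 : γ a ≤ γ t := hγmono (hsubL ⟨le_rfl, hat.le⟩) (hsubL ⟨hat.le, le_rfl⟩) hat.le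
      nlinarith [h1, h2, h3, hat]
    have hσ₂0 : 0 ≤ σ₂ := by
      have h1 := hσ₂ t ⟨le_rfl, htb.le⟩
      have h2 := hσ₂ b ⟨htb.le, le_rfl⟩
      have h3 : γ t ≤ γ b := hγmono (hsubR ⟨le_rfl, htb.le⟩) (hsubR ⟨htb.le, le_rfl⟩) htb.le
      nlinarith [h1, h2, h3, htb]
    have hslope : σ₁ = σ₂ :=
      slopeMatch hd hlQ hlP hκ hκ0 hκK hQpoly hQsmooth hQnonlin hPsmooth
        hat htb ha0 hb1 hσ₁0 hσ₂0 hσ₁ hσ₂ hk₁ hk₂ haQ hbQ hfL hfR hPQ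
    have hβ : β₁ = β₂ := by
      have h1 := hσ₁ t ⟨hat.le, le_rfl⟩
      have h2 := hσ₂ t ⟨le_rfl, htb.le⟩
      rw [hslope] at h1
      linarith [h1, h2]
    refine ⟨a, b, ha0, hat, htb, hb1, σ₂, β₂, fun s hs => ?_⟩
    rcases le_total s t with h | h
    · rw [← hslope, ← hβ]
      exact hσ₁ s ⟨hs.1, h⟩
    · exact hσ₂ s ⟨h, hs.2⟩
  -- Step 2: globalize
  choose A B hA0 hAlt hBgt hB1 σf βf haff using hloc
  set F : (Ioo (0:ℝ) 1) → ℝ × ℝ := fun x => (σf x.1 x.2, βf x.1 x.2) with hFdef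
  have hlc : IsLocallyConstant F := by
    rw [IsLocallyConstant.iff_exists_open]
    rintro ⟨t, ht⟩
    refine ⟨Subtype.val ⁻¹' (Ioo (A t ht) (B t ht)),
      isOpen_Ioo.preimage continuous_subtype_val, ⟨hAlt t ht, hBgt t ht⟩, ?_⟩
    rintro ⟨y, hy⟩ hyU
    simp only [mem_preimage] at hyU
    set M : ℝ := max (A y hy) (A t ht) with hMdef
    set pp : ℝ := (M + y)/2 with hppdef
    have hMy : M < y := max_lt (hAlt y hy) hyU.1
    have hpy : pp < y := by rw [hppdef]; linarith
    have hMp : M < pp := by rw [hppdef]; linarith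
    have hyBy : y ≤ B y hy := (hBgt y hy).le
    have hyBt : y ≤ B t ht := hyU.2.le
    have hp_y : pp ∈ Icc (A y hy) (B y hy) :=
      ⟨le_trans (le_max_left _ _) hMp.le, le_trans hpy.le hyBy⟩
    have hy_y : y ∈ Icc (A y hy) (B y hy) := ⟨(hAlt y hy).le, hyBy⟩
    have hp_t : pp ∈ Icc (A t ht) (B t ht) :=
      ⟨le_trans (le_max_right _ _) hMp.le, le_trans hpy.le hyBt⟩
    have hy_t : y ∈ Icc (A t ht) (B t ht) := ⟨hyU.1.le, hyBt⟩
    have e1 := haff y hy pp hp_y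
    have e2 := haff y hy y hy_y
    have e3 := haff t ht pp hp_t
    have e4 := haff t ht y hy_t
    have h5 : σf y hy * pp + βf y hy = σf t ht * pp + βf t ht := by rw [← e1, e3]
    have h6 : σf y hy * y + βf y hy = σf t ht * y + βf t ht := by rw [← e2, e4]
    have h7 : (σf y hy - σf t ht) * (pp - y) = 0 := by linear_combination h5 - h6
    have hσeq : σf y hy = σf t ht := by
      rcases mul_eq_zero.mp h7 with h | h
      · linarith [sub_eq_zero.mp h]
      · exact absurd (sub_eq_zero.mp h) (ne_of_lt hpy)
    have hβeq : βf y hy = βf t ht := by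
      rw [hσeq] at h6; linarith
    simp only [hFdef, Prod.mk.injEq]
    exact ⟨hσeq, hβeq⟩
  haveI : PreconnectedSpace (Ioo (0:ℝ) 1) := Subtype.preconnectedSpace isPreconnected_Ioo
  set x₀ : (Ioo (0:ℝ) 1) := ⟨1/2, by norm_num⟩ with hx₀def
  have hconst : ∀ x : (Ioo (0:ℝ) 1), F x = F x₀ :=
    fun x => hlc.apply_eq_of_preconnectedSpace x x₀
  set σ₀ : ℝ := (F x₀).1 with hσ₀def
  set β₀ : ℝ := (F x₀).2 with hβ₀def
  have haffG : ∀ t, ∀ ht : t ∈ Ioo (0:ℝ) 1, γ t = σ₀ * t + β₀ := by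
    intro t ht
    have h1 := haff t ht t ⟨(hAlt t ht).le, (hBgt t ht).le⟩
    have h2 := hconst ⟨t, ht⟩
    have hσ : σf t ht = σ₀ := congrArg Prod.fst h2
    have hβ : βf t ht = β₀ := congrArg Prod.snd h2
    rw [hσ, hβ] at h1
    exact h1
  -- Step 3: endpoints
  have hβ0 : γ 0 = β₀ := by
    have hsub : Ioc (0:ℝ) (1/2) ⊆ Icc (0:ℝ) 1 := fun s hs =>
      ⟨hs.1.le, le_trans hs.2 (by norm_num)⟩
    have T1 : Filter.Tendsto γ (𝓝[Ioc (0:ℝ) (1/2)] 0) (𝓝 (γ 0)) :=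
      (hcont 0 (by simp)).mono hsub
    have T2 : Filter.Tendsto γ (𝓝[Ioc (0:ℝ) (1/2)] 0) (𝓝 β₀) := by
      have hg : Filter.Tendsto (fun s => σ₀ * s + β₀) (𝓝[Ioc (0:ℝ) (1/2)] 0)
          (𝓝 (σ₀ * 0 + β₀)) :=
        (((continuous_const.mul continuous_id).add continuous_const).tendsto 0).mono_left
          nhdsWithin_le_nhds
      rw [show σ₀ * 0 + β₀ = β₀ by ring] at hg
      apply hg.congr'
      filter_upwards [self_mem_nhdsWithin] with s hs
      exact (haffG s ⟨hs.1, lt_of_le_of_lt hs.2 (by norm_num)⟩).symm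
    haveI := left_nhdsWithin_Ioc_neBot (show (0:ℝ) < 1/2 by norm_num)
    exact tendsto_nhds_unique T1 T2
  have hσβ1 : γ 1 = σ₀ * 1 + β₀ := by
    have hsub : Ico (1/2:ℝ) 1 ⊆ Icc (0:ℝ) 1 := fun s hs =>
      ⟨le_trans (by norm_num) hs.1, hs.2.le⟩
    have T1 : Filter.Tendsto γ (𝓝[Ico (1/2:ℝ) 1] 1) (𝓝 (γ 1)) :=
      (hcont 1 (by simp)).mono hsub
    have T2 : Filter.Tendsto γ (𝓝[Ico (1/2:ℝ) 1] 1) (𝓝 (σ₀ * 1 + β₀)) := by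
      have hg : Filter.Tendsto (fun s => σ₀ * s + β₀) (𝓝[Ico (1/2:ℝ) 1] 1)
          (𝓝 (σ₀ * 1 + β₀)) :=
        (((continuous_const.mul continuous_id).add continuous_const).tendsto 1).mono_left
          nhdsWithin_le_nhds
      apply hg.congr'
      filter_upwards [self_mem_nhdsWithin] with s hs
      exact (haffG s ⟨lt_of_lt_of_le (by norm_num) hs.1, hs.2⟩).symm
    haveI := right_nhdsWithin_Ico_neBot (show (1/2:ℝ) < 1 by norm_num)
    exact tendsto_nhds_unique T1 T2
  have hβz : β₀ = 0 := by rw [hγ0] at hβ0; linarith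
  have hσ1 : σ₀ = 1 := by rw [hγ1] at hσβ1; rw [hβz] at hσβ1; linarith
  intro t ht
  rcases eq_or_lt_of_le ht.1 with h0 | h0
  · rw [← h0, hγ0]
  rcases eq_or_lt_of_le ht.2 with h1 | h1
  · rw [h1, hγ1]
  rw [haffG t ⟨h0, h1⟩, hσ1, hβz]
  ring
end

section
/- Let Q : ℝ → ℝ² be a curve whose two components are polynomials of degree at most 3, let I, J ⊆ ℝ be compact intervals with nonempty interior, and let γ : I → J be monotonically increasing and surjective. Suppose the image Q(J) is not contained in any affine line of ℝ², and Q ∘ γ agrees on I with a curve whose two components are polynomials of degree at most 3. Then γ agrees on I with an affine function. -/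
open Set Polynomial

private lemma evalDeg3 (p : Polynomial ℝ) (hp : p.natDegree ≤ 3) (x : ℝ) :
    p.eval x = p.coeff 3 * x^3 + p.coeff 2 * x^2 + p.coeff 1 * x + p.coeff 0 := by
  rw [Polynomial.eval_eq_sum_range' (lt_of_le_of_lt hp (by norm_num : (3:ℕ) < 4))]
  simp [Finset.sum_range_succ]
  ring

private lemma expandDeg2 (p : Polynomial ℝ) (hp : p.natDegree ≤ 2) :
    p = C (p.coeff 2) * X^2 + C (p.coeff 1) * X + C (p.coeff 0) := by
  apply Polynomial.funext
  intro x
  rw [evalDeg3 p (hp.trans (by norm_num)),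
    Polynomial.coeff_eq_zero_of_natDegree_lt (lt_of_le_of_lt hp (by norm_num : (2:ℕ) < 3))]
  simp

private lemma lead_ne {p : Polynomial ℝ} {n : ℕ} (hn : n ≠ 0) (h : p.natDegree = n) :
    p.coeff n ≠ 0 := by
  have hp : p ≠ 0 := by
    intro h0
    rw [h0] at h
    simp at h
    exact hn h.symm
  have hl := Polynomial.leadingCoeff_ne_zero.mpr hp
  rw [← h]
  rw [Polynomial.coeff_natDegree]
  exact hl

private lemma nd_le_two {p : Polynomial ℝ} (h3 : p.natDegree ≤ 3) (hc : p.coeff 3 = 0) :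
    p.natDegree ≤ 2 := by
  rw [Polynomial.natDegree_le_iff_coeff_eq_zero]
  intro N hN
  by_cases hN3 : N = 3
  · rw [hN3]; exact hc
  · exact Polynomial.coeff_eq_zero_of_natDegree_lt (by omega)

private lemma nd_le_one {p : Polynomial ℝ} (h3 : p.natDegree ≤ 3) (hc3 : p.coeff 3 = 0)
    (hc2 : p.coeff 2 = 0) : p.natDegree ≤ 1 := by
  rw [Polynomial.natDegree_le_iff_coeff_eq_zero]
  intro N hN
  by_cases hN3 : N = 3
  · rw [hN3]; exact hc3
  by_cases hN2 : N = 2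
  · rw [hN2]; exact hc2
  · exact Polynomial.coeff_eq_zero_of_natDegree_lt (by omega)

private lemma constSq {c e y₀ k : ℝ} (hce : c < e) (h : ∀ x ∈ Set.Icc c e, (x - y₀)^2 = k) :
    False := by
  have h1 := h c ⟨le_refl c, hce.le⟩
  have h2 := h e ⟨hce.le, le_refl e⟩
  have h3 := h ((c+e)/2) ⟨by linarith, by linarith⟩
  have hy : (c - e) * (c + e - 2*y₀) = 0 := by linear_combination h1 - h2
  have hy2 : c + e - 2*y₀ = 0 := by
    rcases mul_eq_zero.mp hy with h'|h'
    · linarith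
    · exact h'
  have hk : k = 0 := by nlinarith [h3]
  nlinarith [h1, h2]

private lemma monoCont (f : ℝ → ℝ) (a b c e : ℝ)
    (hmono : MonotoneOn f (Icc a b)) (him : f '' Icc a b = Icc c e) :
    ContinuousOn f (Icc a b) := by
  intro x₀ hx₀
  have hmem : f x₀ ∈ Icc c e := him ▸ mem_image_of_mem f hx₀
  refine tendsto_order.2 ⟨?_, ?_⟩
  · intro v hv
    rcases lt_or_ge v c with hvc|hvc
    · filter_upwards [self_mem_nhdsWithin] with x hx
      have hxm : f x ∈ Icc c e := him ▸ mem_image_of_mem f hx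
      linarith [hxm.1]
    · have hw : (v + f x₀)/2 ∈ Icc c e := ⟨by linarith, by linarith [hmem.2]⟩
      rw [← him] at hw
      obtain ⟨x₁, hx₁, hfx₁⟩ := hw
      have hx₁lt : x₁ < x₀ := by
        by_contra hle
        push_neg at hle
        have := hmono hx₀ hx₁ hle
        rw [hfx₁] at this
        linarith
      filter_upwards [Filter.inter_mem self_mem_nhdsWithin
        (mem_nhdsWithin_of_mem_nhds (Ioi_mem_nhds hx₁lt))] with x hx
      have := hmono hx₁ hx.1 (le_of_lt hx.2)
      rw [hfx₁] at this
      linarith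
  · intro v hv
    rcases lt_or_ge e v with hvc|hvc
    · filter_upwards [self_mem_nhdsWithin] with x hx
      have hxm : f x ∈ Icc c e := him ▸ mem_image_of_mem f hx
      linarith [hxm.2]
    · have hw : (f x₀ + v)/2 ∈ Icc c e := ⟨by linarith [hmem.1], by linarith⟩
      rw [← him] at hw
      obtain ⟨x₁, hx₁, hfx₁⟩ := hw
      have hx₁gt : x₀ < x₁ := by
        by_contra hle
        push_neg at hle
        have := hmono hx₁ hx₀ hle
        rw [hfx₁] at this
        linarith
      filter_upwards [Filter.inter_mem self_mem_nhdsWithin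
        (mem_nhdsWithin_of_mem_nhds (Iio_mem_nhds hx₁gt))] with x hx
      have := hmono hx.1 hx₁ (le_of_lt hx.2)
      rw [hfx₁] at this
      linarith

private lemma caseL (γ : ℝ → ℝ) (a b : ℝ) (hab : a < b)
    (L M PL PM : Polynomial ℝ) (hL : L.natDegree = 1) (hM2 : 2 ≤ M.natDegree)
    (hPL : PL.natDegree ≤ 3) (hPM : PM.natDegree ≤ 3)
    (hLe : ∀ t ∈ Icc a b, L.eval (γ t) = PL.eval t)
    (hMe : ∀ t ∈ Icc a b, M.eval (γ t) = PM.eval t) :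
    ∃ α β : ℝ, ∀ t ∈ Icc a b, γ t = α * t + β := by
  have hl1 : L.coeff 1 ≠ 0 := lead_ne one_ne_zero hL
  set G : Polynomial ℝ := C (L.coeff 1)⁻¹ * (PL - C (L.coeff 0)) with hG
  have hγG : ∀ t ∈ Icc a b, γ t = G.eval t := by
    intro t ht
    have h := hLe t ht
    rw [evalDeg3 L (by omega)] at h
    rw [Polynomial.coeff_eq_zero_of_natDegree_lt (by omega : L.natDegree < 2),
      Polynomial.coeff_eq_zero_of_natDegree_lt (by omega : L.natDegree < 3)] at h
    simp only [hG, eval_mul, eval_sub, eval_C]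
    field_simp
    linear_combination h
  have hcomp : M.comp G = PM := by
    apply Polynomial.eq_of_infinite_eval_eq
    apply Set.Infinite.mono _ (Set.Icc_infinite hab)
    intro t ht
    simp only [Set.mem_setOf_eq, Polynomial.eval_comp]
    rw [← hγG t ht]
    exact hMe t ht
  have hdeg : M.natDegree * G.natDegree ≤ 3 := by
    rw [← Polynomial.natDegree_comp, hcomp]
    exact hPM
  have hG1 : G.natDegree ≤ 1 := by
    by_contra hcon
    push_neg at hcon
    have := Nat.mul_le_mul hM2 hcon
    omega
  have e2 : G.coeff 2 = 0 := Polynomial.coeff_eq_zero_of_natDegree_lt (by omega)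
  have e3 : G.coeff 3 = 0 := Polynomial.coeff_eq_zero_of_natDegree_lt (by omega)
  refine ⟨G.coeff 1, G.coeff 0, fun t ht => ?_⟩
  rw [hγG t ht, evalDeg3 G (by omega), e2, e3]
  ring

private lemma disc (W A B : Polynomial ℝ) (hW : W.natDegree = 2)
    (hA : A ≠ 0) (hB : B ≠ 0) (hid : A^2 = W * B^2) :
    (W.coeff 1)^2 = 4 * W.coeff 2 * W.coeff 0 := by
  by_contra hD
  have hw2 : W.coeff 2 ≠ 0 := lead_ne two_ne_zero hW
  set w2 := W.coeff 2
  set w1 := W.coeff 1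
  set w0 := W.coeff 0
  have hD0 : w1^2 - 4*w2*w0 ≠ 0 := fun h => hD (by linarith)
  obtain ⟨d, hd⟩ : ∃ d : ℂ, d^2 = ((w1^2 - 4*w2*w0 : ℝ) : ℂ) := by
    rcases le_or_gt 0 (w1^2 - 4*w2*w0) with h|h
    · exact ⟨((Real.sqrt (w1^2 - 4*w2*w0) : ℝ) : ℂ), by
        norm_cast
        exact Real.sq_sqrt h⟩
    · refine ⟨Complex.I * ((Real.sqrt (-(w1^2 - 4*w2*w0)) : ℝ) : ℂ), ?_⟩
      have hsq : (Real.sqrt (-(w1^2 - 4*w2*w0)))^2 = -(w1^2 - 4*w2*w0) :=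
        Real.sq_sqrt (by linarith)
      calc (Complex.I * ((Real.sqrt (-(w1^2 - 4*w2*w0)) : ℝ) : ℂ))^2
          = (Complex.I)^2 * (((Real.sqrt (-(w1^2 - 4*w2*w0)) : ℝ) : ℂ))^2 := by ring
        _ = -((((Real.sqrt (-(w1^2 - 4*w2*w0)))^2 : ℝ)) : ℂ) := by
            rw [Complex.I_sq]; push_cast; ring
        _ = ((w1^2 - 4*w2*w0 : ℝ) : ℂ) := by rw [hsq]; push_cast; ring
  have hdc : d^2 = (w1:ℂ)^2 - 4*(w2:ℂ)*(w0:ℂ) := by rw [hd]; push_cast; ring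
  have hdne : d ≠ 0 := by
    intro h
    rw [h] at hd
    simp at hd
    exact hD0 (Complex.ofReal_injective (by push_cast at hd ⊢; linear_combination -hd))
  have hw2c : (w2:ℂ) ≠ 0 := by exact_mod_cast hw2
  set z1 : ℂ := (-(w1:ℂ) + d)/(2*(w2:ℂ)) with hz1
  set z2 : ℂ := (-(w1:ℂ) - d)/(2*(w2:ℂ)) with hz2
  have hz12 : z1 - z2 = d/(w2:ℂ) := by
    rw [hz1, hz2]
    field_simp
    ring
  have hzne : z1 ≠ z2 := by
    intro h
    rw [h, sub_self] at hz12
    exact hdne (by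
      have := hz12.symm
      rw [_root_.div_eq_zero_iff] at this
      tauto)
  have hsum : (w2:ℂ) * (z1 + z2) = -(w1:ℂ) := by
    rw [hz1, hz2]
    field_simp
    ring
  have hprod : 4*(w2:ℂ)^2 * (z1 * z2) = (w1:ℂ)^2 - d^2 := by
    rw [hz1, hz2]
    field_simp
    ring
  have hprod2 : (w2:ℂ) * (z1 * z2) = (w0:ℂ) := by
    have h4 : (4*(w2:ℂ)) * ((w2:ℂ) * (z1*z2) - (w0:ℂ)) = 0 := by
      linear_combination hprod - hdc
    rcases mul_eq_zero.mp h4 with h'|h'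
    · exfalso; apply hw2c; linear_combination h' / 4
    · linear_combination h'
  set f := algebraMap ℝ ℂ
  have hWm : W.map f = C (w2:ℂ) * ((X - C z1) * (X - C z2)) := by
    rw [expandDeg2 W (by omega)]
    apply Polynomial.funext
    intro x
    simp only [Polynomial.map_add, Polynomial.map_mul, Polynomial.map_pow,
      Polynomial.map_C, Polynomial.map_X, eval_add, eval_mul, eval_pow, eval_sub,
      eval_C, eval_X]
    have hfc : ∀ y : ℝ, f y = (y:ℂ) := fun y => rfl
    rw [hfc, hfc, hfc]
    linear_combination x * hsum - hprod2
  have hAm : A.map f ≠ 0 := Polynomial.map_ne_zero hA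
  have hBm : B.map f ≠ 0 := Polynomial.map_ne_zero hB
  have hWmne : W.map f ≠ 0 := Polynomial.map_ne_zero (fun h => by
    rw [h] at hW; simp at hW)
  have hidm : (A.map f)^2 = (W.map f) * (B.map f)^2 := by
    have := congrArg (Polynomial.map f) hid
    simpa [Polynomial.map_mul, Polynomial.map_pow] using this
  have key := congrArg (Polynomial.rootMultiplicity z1) hidm
  rw [pow_two, pow_two] at key
  rw [Polynomial.rootMultiplicity_mul (mul_ne_zero hAm hAm),
    Polynomial.rootMultiplicity_mul (mul_ne_zero hWmne (mul_ne_zero hBm hBm)),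
    Polynomial.rootMultiplicity_mul (mul_ne_zero hBm hBm)] at key
  have hXz1 : (X - C z1 : Polynomial ℂ) ≠ 0 := Polynomial.X_sub_C_ne_zero z1
  have hXz2 : (X - C z2 : Polynomial ℂ) ≠ 0 := Polynomial.X_sub_C_ne_zero z2
  have hCw2 : (C (w2:ℂ) : Polynomial ℂ) ≠ 0 := by
    simp [Polynomial.C_eq_zero, hw2c]
  have hWmult : Polynomial.rootMultiplicity z1 (W.map f) = 1 := by
    rw [hWm, Polynomial.rootMultiplicity_mul (mul_ne_zero hCw2 (mul_ne_zero hXz1 hXz2)),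
      Polynomial.rootMultiplicity_mul (mul_ne_zero hXz1 hXz2),
      Polynomial.rootMultiplicity_X_sub_C_self,
      Polynomial.rootMultiplicity_eq_zero (by simp [Polynomial.IsRoot, hw2c]),
      Polynomial.rootMultiplicity_eq_zero (by
        simp only [Polynomial.IsRoot, eval_sub, eval_X, eval_C, sub_eq_zero]
        exact hzne)]
  rw [hWmult] at key
  omega

private lemma branch (γ : ℝ → ℝ) (a b y₀ s r : ℝ) (hab : a < b)
    (hmono : MonotoneOn γ (Icc a b)) (hcont : ContinuousOn γ (Icc a b))
    (hs : 0 < s)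
    (h : ∀ t ∈ Icc a b, (γ t - y₀)^2 = s^2 * (t - r)^2) :
    ∀ t ∈ Icc a b, γ t = y₀ + s * (t - r) := by
  have hbr : ∀ t ∈ Icc a b, γ t = y₀ + s*(t-r) ∨ γ t = y₀ - s*(t-r) := by
    intro t ht
    have h0 := h t ht
    have h1 : (γ t - y₀ - s*(t-r)) * (γ t - y₀ + s*(t-r)) = 0 := by linear_combination h0
    rcases mul_eq_zero.mp h1 with h'|h'
    · left; linarith
    · right; linarith
  by_cases hall : ∀ t ∈ Icc a b, γ t = y₀ + s*(t-r)
  · exact fun t ht => hall t ht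
  push_neg at hall
  obtain ⟨t₀, ht₀, hbad⟩ := hall
  exfalso
  have hplus : ∀ t ∈ Icc a b, t ≠ t₀ → γ t = y₀ + s*(t-r) := by
    intro t ht htne
    by_contra hbad'
    have hm1 : γ t = y₀ - s*(t - r) := (hbr t ht).resolve_left hbad'
    have hm0 : γ t₀ = y₀ - s*(t₀ - r) := (hbr t₀ ht₀).resolve_left hbad
    rcases lt_or_gt_of_ne htne with hlt|hgt
    · have := hmono ht ht₀ hlt.le
      nlinarith
    · have := hmono ht₀ ht hgt.le
      nlinarith
  have hex : ∃ u : Set ℝ, u ⊆ Icc a b ∧ t₀ ∉ u ∧ t₀ ∈ closure u := by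
    rcases eq_or_lt_of_le ht₀.2 with h1|h1
    · refine ⟨Ico a t₀, fun x hx => ⟨hx.1, hx.2.le.trans ht₀.2⟩, by simp, ?_⟩
      rw [closure_Ico (show a ≠ t₀ by rw [h1]; exact ne_of_lt hab)]
      exact ⟨by rw [h1]; exact hab.le, le_refl t₀⟩
    · refine ⟨Ioc t₀ b, fun x hx => ⟨ht₀.1.trans hx.1.le, hx.2⟩, by simp, ?_⟩
      rw [closure_Ioc (ne_of_lt h1)]
      exact ⟨le_refl t₀, h1.le⟩
  obtain ⟨u, hu_sub, hu_notmem, hu_cl⟩ := hex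
  have hNB : Filter.NeBot (nhdsWithin t₀ u) := mem_closure_iff_nhdsWithin_neBot.mp hu_cl
  have h1 : Filter.Tendsto γ (nhdsWithin t₀ u) (nhds (γ t₀)) :=
    (hcont t₀ ht₀).mono hu_sub
  have hgc : Continuous (fun t : ℝ => y₀ + s*(t - r)) := by continuity
  have h2 : Filter.Tendsto γ (nhdsWithin t₀ u) (nhds (y₀ + s*(t₀ - r))) := by
    have hgt : Filter.Tendsto (fun t : ℝ => y₀ + s*(t - r)) (nhdsWithin t₀ u)
        (nhds (y₀ + s*(t₀ - r))) := (hgc.tendsto t₀).mono_left nhdsWithin_le_nhds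
    apply hgt.congr'
    filter_upwards [self_mem_nhdsWithin] with x hx
    exact (hplus x (hu_sub hx) (fun heq => hu_notmem (heq ▸ hx))).symm
  exact hbad (tendsto_nhds_unique h1 h2)

private lemma caseQ (γ : ℝ → ℝ) (a b c e : ℝ) (hab : a < b) (hce : c < e)
    (hmono : MonotoneOn γ (Icc a b)) (hcont : ContinuousOn γ (Icc a b))
    (himg : γ '' Icc a b = Icc c e)
    (S T PS PT : Polynomial ℝ) (hS2 : S.natDegree = 2) (hT3 : T.natDegree = 3)
    (hPS : PS.natDegree ≤ 3) (hPT : PT.natDegree ≤ 3)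
    (hSe : ∀ t ∈ Icc a b, S.eval (γ t) = PS.eval t)
    (hTe : ∀ t ∈ Icc a b, T.eval (γ t) = PT.eval t) :
    ∃ α β : ℝ, ∀ t ∈ Icc a b, γ t = α * t + β := by
  have hsurj : Icc c e ⊆ γ '' Icc a b := himg.ge
  have hs2 : S.coeff 2 ≠ 0 := lead_ne two_ne_zero hS2
  set s2 := S.coeff 2 with hs2def
  set s1 := S.coeff 1 with hs1def
  set s0 := S.coeff 0 with hs0def
  set y₀ := -s1/(2*s2) with hy₀def
  set W : Polynomial ℝ := C s2⁻¹ * (PS - C s0 + C (s1^2/(4*s2))) with hWdef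
  have hW3 : W.natDegree ≤ 3 := by
    refine (Polynomial.natDegree_C_mul_le _ _).trans ?_
    refine (Polynomial.natDegree_add_le _ _).trans (max_le ?_ (by simp))
    exact (Polynomial.natDegree_sub_le _ _).trans (max_le hPS (by simp))
  have hWe : ∀ t ∈ Icc a b, (γ t - y₀)^2 = W.eval t := by
    intro t ht
    have h := hSe t ht
    rw [evalDeg3 S (by omega),
      Polynomial.coeff_eq_zero_of_natDegree_lt (by omega : S.natDegree < 3)] at h
    simp only [hWdef, eval_mul, eval_add, eval_sub, eval_C]
    rw [hy₀def]
    field_simp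
    linear_combination (16*s2) * h
  have ht3 : T.coeff 3 ≠ 0 := lead_ne three_ne_zero hT3
  set t3 := T.coeff 3 with ht3def
  set c2 := 3*t3*y₀ + T.coeff 2 with hc2def
  set c1 := 3*t3*y₀^2 + 2*(T.coeff 2)*y₀ + T.coeff 1 with hc1def
  set c0 := t3*y₀^3 + (T.coeff 2)*y₀^2 + (T.coeff 1)*y₀ + T.coeff 0 with hc0def
  set A : Polynomial ℝ := PT - C c2 * W - C c0 with hAdef
  set B : Polynomial ℝ := C t3 * W + C c1 with hBdef
  have hABe : ∀ t ∈ Icc a b, (γ t - y₀) * B.eval t = A.eval t := by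
    intro t ht
    have hT' := hTe t ht
    rw [evalDeg3 T (by omega)] at hT'
    have hW' := hWe t ht
    simp only [hAdef, hBdef, eval_add, eval_sub, eval_mul, eval_C]
    rw [hc2def, hc1def, hc0def]
    linear_combination hT' - (t3*(γ t - y₀) + 3*t3*y₀ + T.coeff 2) * hW'
  have hsq : A^2 = W * B^2 := by
    apply Polynomial.eq_of_infinite_eval_eq
    apply Set.Infinite.mono _ (Set.Icc_infinite hab)
    intro t ht
    have h1 := hABe t ht
    have h2 := hWe t ht
    simp only [Set.mem_setOf_eq, eval_mul, eval_pow]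
    linear_combination (B.eval t)^2 * h2 - (A.eval t + (γ t - y₀)*(B.eval t)) * h1
  by_cases hWd : W.natDegree = 0
  · exfalso
    obtain ⟨k, hk⟩ : ∃ k, W = C k := ⟨W.coeff 0, Polynomial.eq_C_of_natDegree_le_zero (by omega)⟩
    refine constSq hce (y₀ := y₀) (k := k) ?_
    intro x hx
    obtain ⟨t, ht, rfl⟩ := hsurj hx
    rw [hWe t ht, hk, eval_C]
  · have hWne : W ≠ 0 := fun h0 => hWd (by rw [h0]; simp)
    have hBne : B ≠ 0 := by
      intro hB0
      apply hWd
      have hBe : ∀ x : ℝ, t3 * W.eval x + c1 = 0 := by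
        intro x
        have := congrArg (Polynomial.eval x) hB0
        simpa [hBdef] using this
      have hWc : W = C (-c1/t3) := by
        apply Polynomial.funext
        intro x
        rw [eval_C]
        have := hBe x
        field_simp
        linarith
      rw [hWc]
      simp
    have hAne : A ≠ 0 := by
      intro hA0
      rw [hA0] at hsq
      have h0 : W * B^2 = 0 := by simpa using hsq.symm
      rcases mul_eq_zero.mp h0 with h'|h'
      · exact hWne h'
      · exact hBne (pow_eq_zero_iff two_ne_zero |>.mp h')
    have hdeg := congrArg Polynomial.natDegree hsq
    rw [Polynomial.natDegree_pow, Polynomial.natDegree_mul hWne (pow_ne_zero 2 hBne),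
      Polynomial.natDegree_pow] at hdeg
    have hW2 : W.natDegree = 2 := by omega
    have hDisc := disc W A B hW2 hAne hBne hsq
    have hw2 : W.coeff 2 ≠ 0 := lead_ne two_ne_zero hW2
    set r := -(W.coeff 1)/(2*W.coeff 2) with hrdef
    have hWr : ∀ x : ℝ, W.eval x = W.coeff 2 * (x - r)^2 := by
      intro x
      rw [evalDeg3 W hW3,
        Polynomial.coeff_eq_zero_of_natDegree_lt (by omega : W.natDegree < 3), hrdef]
      field_simp
      linear_combination (-1) * hDisc
    have hw2pos : 0 < W.coeff 2 := by
      have key : ∀ t ∈ Icc a b, t ≠ r → 0 ≤ W.coeff 2 := by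
        intro t ht htr
        have h1 := hWe t ht
        rw [hWr t] at h1
        have h2 : 0 < (t - r)^2 := lt_of_le_of_ne (sq_nonneg _) (Ne.symm (pow_ne_zero 2 (sub_ne_zero.mpr htr)))
        nlinarith [sq_nonneg (γ t - y₀)]
      rcases le_or_gt r a with hr|hr
      · have := key b ⟨hab.le, le_refl b⟩ (by intro h; have h2 : a < r := h ▸ hab; linarith)
        exact lt_of_le_of_ne this (Ne.symm hw2)
      · have := key a ⟨le_refl a, hab.le⟩ (by intro h; rw [h] at hr; exact lt_irrefl r hr)
        exact lt_of_le_of_ne this (Ne.symm hw2)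
    set s := Real.sqrt (W.coeff 2) with hsdef
    have hspos : 0 < s := Real.sqrt_pos.mpr hw2pos
    have hssq : s^2 = W.coeff 2 := Real.sq_sqrt hw2pos.le
    have hkey : ∀ t ∈ Icc a b, (γ t - y₀)^2 = s^2 * (t - r)^2 := by
      intro t ht
      rw [hWe t ht, hWr t, hssq]
    have hbr := branch γ a b y₀ s r hab hmono hcont hspos hkey
    exact ⟨s, y₀ - s*r, fun t ht => by rw [hbr t ht]; ring⟩

theorem stmt_5 (Q : ℝ → ℝ × ℝ) (Q₁ Q₂ : Polynomial ℝ)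
    (hQ₁ : Q₁.natDegree ≤ 3) (hQ₂ : Q₂.natDegree ≤ 3)
    (hQ : ∀ t : ℝ, Q t = (Q₁.eval t, Q₂.eval t))
    (a b c e : ℝ) (hab : a < b) (hce : c < e)
    (γ : ℝ → ℝ)
    (hγmono : MonotoneOn γ (Icc a b))
    (hγmaps : MapsTo γ (Icc a b) (Icc c e))
    (hγsurj : SurjOn γ (Icc a b) (Icc c e))
    (hnonlin : ¬ ∃ (x v : ℝ × ℝ), v ≠ 0 ∧
      ∀ w ∈ Q '' (Icc c e), ∃ r : ℝ, w = x + r • v)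
    (P₁ P₂ : Polynomial ℝ) (hP₁ : P₁.natDegree ≤ 3) (hP₂ : P₂.natDegree ≤ 3)
    (hcomp : ∀ t ∈ Icc a b, Q (γ t) = (P₁.eval t, P₂.eval t)) :
    ∃ α β : ℝ, ∀ t ∈ Icc a b, γ t = α * t + β := by
  have hEval : ∀ u v : ℝ, ∀ t ∈ Icc a b,
      (C u * Q₁ + C v * Q₂).eval (γ t) = (C u * P₁ + C v * P₂).eval t := by
    intro u v t ht
    have h1 := hcomp t ht
    rw [hQ (γ t)] at h1
    have e1 : Q₁.eval (γ t) = P₁.eval t := congrArg Prod.fst h1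
    have e2 : Q₂.eval (γ t) = P₂.eval t := congrArg Prod.snd h1
    simp [e1, e2]
  have hcoeff : ∀ (u v : ℝ) (i : ℕ),
      (C u * Q₁ + C v * Q₂).coeff i = u * Q₁.coeff i + v * Q₂.coeff i := by
    intro u v i
    simp [Polynomial.coeff_add, Polynomial.coeff_C_mul]
  have hnd3 : ∀ u v : ℝ, (C u * Q₁ + C v * Q₂).natDegree ≤ 3 := fun u v =>
    (Polynomial.natDegree_add_le _ _).trans (max_le
      ((Polynomial.natDegree_C_mul_le _ _).trans hQ₁)
      ((Polynomial.natDegree_C_mul_le _ _).trans hQ₂))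
  have hnd3P : ∀ u v : ℝ, (C u * P₁ + C v * P₂).natDegree ≤ 3 := fun u v =>
    (Polynomial.natDegree_add_le _ _).trans (max_le
      ((Polynomial.natDegree_C_mul_le _ _).trans hP₁)
      ((Polynomial.natDegree_C_mul_le _ _).trans hP₂))
  have hNC : ∀ u v : ℝ, ¬(u = 0 ∧ v = 0) → 1 ≤ (C u * Q₁ + C v * Q₂).natDegree := by
    intro u v huv
    by_contra hd
    push_neg at hd
    have h0 : C u * Q₁ + C v * Q₂ = C ((C u * Q₁ + C v * Q₂).coeff 0) :=
      Polynomial.eq_C_of_natDegree_le_zero (by omega)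
    set k := (C u * Q₁ + C v * Q₂).coeff 0 with hkdef
    have hk : ∀ x : ℝ, u * Q₁.eval x + v * Q₂.eval x = k := by
      intro x
      have := congrArg (Polynomial.eval x) h0
      simpa using this
    apply hnonlin
    have hn : 0 < u^2 + v^2 := by
      rcases not_and_or.mp huv with h|h
      · have : 0 < u^2 := lt_of_le_of_ne (sq_nonneg u) (Ne.symm (pow_ne_zero 2 h))
        nlinarith [sq_nonneg v]
      · have : 0 < v^2 := lt_of_le_of_ne (sq_nonneg v) (Ne.symm (pow_ne_zero 2 h))
        nlinarith [sq_nonneg u]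
    refine ⟨(u*k/(u^2+v^2), v*k/(u^2+v^2)), (-v, u), ?_, ?_⟩
    · intro hcontra
      rw [Prod.ext_iff] at hcontra
      simp at hcontra
      exact huv ⟨hcontra.2, hcontra.1⟩
    · rintro w ⟨x, hx, rfl⟩
      rw [hQ x]
      refine ⟨(-v * Q₁.eval x + u * Q₂.eval x)/(u^2+v^2), ?_⟩
      have hkx := hk x
      rw [Prod.ext_iff]
      constructor
      · simp only [Prod.fst_add, Prod.smul_fst, smul_eq_mul]
        field_simp
        linear_combination u * hkx
      · simp only [Prod.snd_add, Prod.smul_snd, smul_eq_mul]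
        field_simp
        linear_combination v * hkx
  have himg : γ '' Icc a b = Icc c e := Subset.antisymm (hγmaps.image_subset) hγsurj
  have hcont := monoCont γ a b c e hγmono himg
  by_cases h3 : Q₁.coeff 3 = 0 ∧ Q₂.coeff 3 = 0
  · by_cases h2 : Q₁.coeff 2 = 0 ∧ Q₂.coeff 2 = 0
    · exfalso
      apply hnonlin
      by_cases hv : Q₁.coeff 1 = 0 ∧ Q₂.coeff 1 = 0
      · refine ⟨(Q₁.coeff 0, Q₂.coeff 0), (1,0), by simp [Prod.ext_iff], ?_⟩
        rintro w ⟨x, hx, rfl⟩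
        refine ⟨0, ?_⟩
        rw [hQ x, evalDeg3 Q₁ hQ₁, evalDeg3 Q₂ hQ₂, h3.1, h3.2, h2.1, h2.2, hv.1, hv.2]
        rw [Prod.ext_iff]
        constructor <;> simp
      · refine ⟨(Q₁.coeff 0, Q₂.coeff 0), (Q₁.coeff 1, Q₂.coeff 1), ?_, ?_⟩
        · intro hcontra
          rw [Prod.ext_iff] at hcontra
          exact hv ⟨hcontra.1, hcontra.2⟩
        · rintro w ⟨x, hx, rfl⟩
          refine ⟨x, ?_⟩
          rw [hQ x, evalDeg3 Q₁ hQ₁, evalDeg3 Q₂ hQ₂, h3.1, h3.2, h2.1, h2.2]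
          rw [Prod.ext_iff]
          constructor
          · simp only [Prod.fst_add, Prod.smul_fst, smul_eq_mul]; ring
          · simp only [Prod.snd_add, Prod.smul_snd, smul_eq_mul]; ring
    · obtain ⟨u, v, huv, hMc⟩ : ∃ u v : ℝ, ¬(u=0∧v=0) ∧ (C u * Q₁ + C v * Q₂).coeff 2 ≠ 0 := by
        rcases not_and_or.mp h2 with h|h
        · exact ⟨1, 0, by simp, by rw [hcoeff]; simpa using h⟩
        · exact ⟨0, 1, by simp, by rw [hcoeff]; simpa using h⟩
      have hM2 : (C u * Q₁ + C v * Q₂).natDegree = 2 := by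
        refine le_antisymm (nd_le_two (hnd3 u v) ?_) (Polynomial.le_natDegree_of_ne_zero hMc)
        rw [hcoeff, h3.1, h3.2]
        ring
      have hLc2 : (C (Q₂.coeff 2) * Q₁ + C (-(Q₁.coeff 2)) * Q₂).coeff 2 = 0 := by
        rw [hcoeff]; ring
      have hLc3 : (C (Q₂.coeff 2) * Q₁ + C (-(Q₁.coeff 2)) * Q₂).coeff 3 = 0 := by
        rw [hcoeff, h3.1, h3.2]; ring
      have hL1 : (C (Q₂.coeff 2) * Q₁ + C (-(Q₁.coeff 2)) * Q₂).natDegree = 1 := by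
        refine le_antisymm (nd_le_one (hnd3 _ _) hLc3 hLc2) (hNC _ _ ?_)
        intro hcontra
        rcases not_and_or.mp h2 with h|h
        · exact h (by have := hcontra.2; linarith)
        · exact h hcontra.1
      exact caseL γ a b hab _ _ _ _ hL1 (le_of_eq hM2.symm) (hnd3P _ _) (hnd3P u v)
        (hEval _ _) (hEval u v)
  · obtain ⟨u, v, huv, hTc⟩ : ∃ u v : ℝ, ¬(u=0∧v=0) ∧ (C u * Q₁ + C v * Q₂).coeff 3 ≠ 0 := by
      rcases not_and_or.mp h3 with h|h
      · exact ⟨1, 0, by simp, by rw [hcoeff]; simpa using h⟩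
      · exact ⟨0, 1, by simp, by rw [hcoeff]; simpa using h⟩
    have hT3 : (C u * Q₁ + C v * Q₂).natDegree = 3 :=
      le_antisymm (hnd3 u v) (Polynomial.le_natDegree_of_ne_zero hTc)
    have hSc3 : (C (Q₂.coeff 3) * Q₁ + C (-(Q₁.coeff 3)) * Q₂).coeff 3 = 0 := by
      rw [hcoeff]; ring
    have hSpair : ¬(Q₂.coeff 3 = 0 ∧ -(Q₁.coeff 3) = 0) := by
      intro hcontra
      rcases not_and_or.mp h3 with h|h
      · exact h (by have := hcontra.2; linarith)
      · exact h hcontra.1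
    have hS1 : 1 ≤ (C (Q₂.coeff 3) * Q₁ + C (-(Q₁.coeff 3)) * Q₂).natDegree := hNC _ _ hSpair
    have hS2 : (C (Q₂.coeff 3) * Q₁ + C (-(Q₁.coeff 3)) * Q₂).natDegree ≤ 2 :=
      nd_le_two (hnd3 _ _) hSc3
    by_cases hSd : (C (Q₂.coeff 3) * Q₁ + C (-(Q₁.coeff 3)) * Q₂).natDegree = 1
    · exact caseL γ a b hab _ _ _ _ hSd (by rw [hT3]; norm_num) (hnd3P _ _) (hnd3P u v)
        (hEval _ _) (hEval u v)
    · have hSd2 : (C (Q₂.coeff 3) * Q₁ + C (-(Q₁.coeff 3)) * Q₂).natDegree = 2 := by omega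
      exact caseQ γ a b c e hab hce hγmono hcont himg _ _ _ _ hSd2 hT3 (hnd3P _ _)
        (hnd3P u v) (hEval _ _) (hEval u v)
end

section
/- Define Q, P : [0,1] → ℝ² by Q(t) = (4t⁴ − 2t², 4t⁴) and P(t) = (t⁴ + 2t³ − t, t⁴ + 2t³ + t²), and define γ : [0,1] → [0,1] by γ(t) = √((t² + t)/2). Then γ is monotonically increasing and onto with γ(0) = 0 and γ(1) = 1, γ is not the identity function, and P(t) = Q(γ(t)) for all t ∈ [0,1]. -/
open Set

theorem stmt_7 (Q P : ℝ → ℝ × ℝ) (γ : ℝ → ℝ)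
    (hQ : ∀ t : ℝ, Q t = (4 * t ^ 4 - 2 * t ^ 2, 4 * t ^ 4))
    (hP : ∀ t : ℝ, P t = (t ^ 4 + 2 * t ^ 3 - t, t ^ 4 + 2 * t ^ 3 + t ^ 2))
    (hγ : ∀ t : ℝ, γ t = Real.sqrt ((t ^ 2 + t) / 2)) :
    MonotoneOn γ (Icc (0:ℝ) 1) ∧
    MapsTo γ (Icc (0:ℝ) 1) (Icc (0:ℝ) 1) ∧
    SurjOn γ (Icc (0:ℝ) 1) (Icc (0:ℝ) 1) ∧
    γ 0 = 0 ∧ γ 1 = 1 ∧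
    (∃ t ∈ Icc (0:ℝ) 1, γ t ≠ t) ∧
    ∀ t ∈ Icc (0:ℝ) 1, P t = Q (γ t) := by
  refine ⟨?_, ?_, ?_, ?_, ?_, ?_, ?_⟩
  · intro a ha b hb hab
    rw [hγ, hγ]
    apply Real.sqrt_le_sqrt
    have := ha.1
    nlinarith
  · intro t ht
    rw [hγ]
    constructor
    · exact Real.sqrt_nonneg _
    · rw [show (1:ℝ) = Real.sqrt 1 by simp]
      exact Real.sqrt_le_sqrt (by nlinarith [ht.1, ht.2])
  · intro y hy
    obtain ⟨hy0, hy1⟩ := hy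
    set s := Real.sqrt (1 + 8 * y ^ 2) with hs
    have hs0 : (0:ℝ) ≤ 1 + 8 * y ^ 2 := by nlinarith
    have hssq : s ^ 2 = 1 + 8 * y ^ 2 := Real.sq_sqrt hs0
    have hs1 : 1 ≤ s := by
      nlinarith [Real.sqrt_nonneg (1 + 8 * y ^ 2)]
    have hs3 : s ≤ 3 := by
      nlinarith [Real.sqrt_nonneg (1 + 8 * y ^ 2)]
    refine ⟨(s - 1) / 2, ⟨by linarith, by linarith⟩, ?_⟩
    rw [hγ]
    have : (((s - 1) / 2) ^ 2 + (s - 1) / 2) / 2 = y ^ 2 := by nlinarith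
    rw [this, Real.sqrt_sq hy0]
  · rw [hγ]; norm_num
  · rw [hγ]; norm_num
  · refine ⟨1/2, ⟨by norm_num, by norm_num⟩, ?_⟩
    rw [hγ]
    intro h
    have : Real.sqrt ((((1:ℝ)/2) ^ 2 + 1/2) / 2) ^ 2 = (1/2:ℝ)^2 := by rw [h]
    rw [Real.sq_sqrt (by norm_num)] at this
    norm_num at this
  · intro t ht
    rw [hP, hQ, hγ]
    have h2 : Real.sqrt ((t ^ 2 + t) / 2) ^ 2 = (t ^ 2 + t) / 2 := by
      apply Real.sq_sqrt
      nlinarith [ht.1, ht.2]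
    have h4 : Real.sqrt ((t ^ 2 + t) / 2) ^ 4 = ((t ^ 2 + t) / 2) ^ 2 := by
      rw [show (4:ℕ) = 2 * 2 from rfl, pow_mul, h2]
    rw [Prod.mk.injEq]
    constructor
    · rw [h4, h2]; ring
    · rw [h4]; ring
end

section
/- Define p : [0,1] → ℝ² piecewise constant by p(t) = (−3, 0) for t ∈ [0, 1/4), p(t) = (2, −4) for t ∈ [1/4, 1/2), p(t) = (−4, 2) for t ∈ [1/2, 3/4), and p(t) = (0, −3) for t ∈ [3/4, 1]. Define Φ : [0,1] → ℝ by Φ(t₁) = √((1/2)·∫₀^{t₁} ⟨p(t), (−3, 1)⟩₊² dt) + √((1/2)·∫_{t₁}^{1} ⟨p(t), (1, −3)⟩₊² dt). Then Φ(1 − t₁) = Φ(t₁) for all t₁ ∈ [0,1], and Φ attains its maximum over [0,1] at both t₁ = 1/4 and t₁ = 3/4. -/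
open Set MeasureTheory

/-- step function for the first integrand -/
noncomputable def f0 : ℝ → ℝ := fun t =>
  if t < 1/4 then 81 else if t < 1/2 then 0 else if t < 3/4 then 196 else 0

/-- step function for the second integrand -/
noncomputable def g0 : ℝ → ℝ := fun t =>
  if t < 1/4 then 0 else if t < 1/2 then 196 else if t < 3/4 then 0 else 81

/-- closed form of the first integral -/
noncomputable def Fv : ℝ → ℝ := fun t =>
  if t ≤ 1/4 then 81*t else if t ≤ 1/2 then 81/4
  else if t ≤ 3/4 then 81/4 + 196*(t-1/2) else 277/4

/-- closed form of the second integral -/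
noncomputable def Gv : ℝ → ℝ := fun t =>
  if t ≤ 1/4 then 277/4 else if t ≤ 1/2 then 196*(1/2-t)+81/4
  else if t ≤ 3/4 then 81/4 else 81*(1-t)

lemma ae_ne' (b : ℝ) : ∀ᵐ x : ℝ, x ≠ b := by
  rw [ae_iff]
  simpa using measure_singleton (μ := (volume : Measure ℝ)) b

lemma step_int (f : ℝ → ℝ) (c a b : ℝ) (hab : a ≤ b)
    (h : ∀ x, a < x → x < b → f x = c) : ∫ x in a..b, f x = c * (b - a) := by
  have : ∫ x in a..b, f x = ∫ _x in a..b, c := by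
    apply intervalIntegral.integral_congr_ae
    filter_upwards [ae_ne' b] with x hx hmem
    rw [uIoc_of_le hab] at hmem
    exact h x hmem.1 (lt_of_le_of_ne hmem.2 hx)
  rw [this, intervalIntegral.integral_const, smul_eq_mul, mul_comm]

lemma step_ii (f : ℝ → ℝ) (M a b : ℝ) (hm : Measurable f)
    (hb : ∀ x, |f x| ≤ M) : IntervalIntegrable f volume a b := by
  rw [intervalIntegrable_iff]
  apply Measure.integrableOn_of_bounded (M := M) measure_Ioc_lt_top.ne
    hm.aestronglyMeasurable
  exact ae_of_all _ fun x => by simpa using hb x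

lemma f0_meas : Measurable f0 :=
  Measurable.ite (measurableSet_lt measurable_id measurable_const) measurable_const
    (Measurable.ite (measurableSet_lt measurable_id measurable_const) measurable_const
      (Measurable.ite (measurableSet_lt measurable_id measurable_const) measurable_const
        measurable_const))

lemma g0_meas : Measurable g0 :=
  Measurable.ite (measurableSet_lt measurable_id measurable_const) measurable_const
    (Measurable.ite (measurableSet_lt measurable_id measurable_const) measurable_const
      (Measurable.ite (measurableSet_lt measurable_id measurable_const) measurable_const
        measurable_const))

lemma f0_bdd : ∀ x, |f0 x| ≤ 196 := by
  intro x; unfold f0; split_ifs <;> rw [abs_of_nonneg (by norm_num)] <;> norm_num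

lemma g0_bdd : ∀ x, |g0 x| ≤ 196 := by
  intro x; unfold g0; split_ifs <;> rw [abs_of_nonneg (by norm_num)] <;> norm_num

lemma f0_ii (a b : ℝ) : IntervalIntegrable f0 volume a b :=
  step_ii f0 196 a b f0_meas f0_bdd

lemma g0_ii (a b : ℝ) : IntervalIntegrable g0 volume a b :=
  step_ii g0 196 a b g0_meas g0_bdd

lemma intF : ∀ t ∈ Icc (0:ℝ) 1, (∫ x in (0:ℝ)..t, f0 x) = Fv t := by
  rintro t ⟨h0, h1⟩
  unfold Fv
  split_ifs with h14 h12 h34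
  · rw [step_int f0 81 0 t h0
      (fun x hx hx' => by unfold f0; rw [if_pos (by linarith)])]
    ring
  · push_neg at h14
    rw [← intervalIntegral.integral_add_adjacent_intervals (f0_ii 0 (1/4)) (f0_ii (1/4) t),
      step_int f0 81 0 (1/4) (by norm_num)
        (fun x hx hx' => by unfold f0; rw [if_pos (by linarith)]),
      step_int f0 0 (1/4) t (by linarith)
        (fun x hx hx' => by unfold f0; rw [if_neg (by linarith), if_pos (by linarith)])]
    ring
  · push_neg at h14 h12
    rw [← intervalIntegral.integral_add_adjacent_intervals (f0_ii 0 (1/2)) (f0_ii (1/2) t),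
      ← intervalIntegral.integral_add_adjacent_intervals (f0_ii 0 (1/4)) (f0_ii (1/4) (1/2)),
      step_int f0 81 0 (1/4) (by norm_num)
        (fun x hx hx' => by unfold f0; rw [if_pos (by linarith)]),
      step_int f0 0 (1/4) (1/2) (by norm_num)
        (fun x hx hx' => by unfold f0; rw [if_neg (by linarith), if_pos (by linarith)]),
      step_int f0 196 (1/2) t (by linarith)
        (fun x hx hx' => by
          unfold f0; rw [if_neg (by linarith), if_neg (by linarith), if_pos (by linarith)])]
    ring
  · push_neg at h14 h12 h34
    rw [← intervalIntegral.integral_add_adjacent_intervals (f0_ii 0 (3/4)) (f0_ii (3/4) t),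
      ← intervalIntegral.integral_add_adjacent_intervals (f0_ii 0 (1/2)) (f0_ii (1/2) (3/4)),
      ← intervalIntegral.integral_add_adjacent_intervals (f0_ii 0 (1/4)) (f0_ii (1/4) (1/2)),
      step_int f0 81 0 (1/4) (by norm_num)
        (fun x hx hx' => by unfold f0; rw [if_pos (by linarith)]),
      step_int f0 0 (1/4) (1/2) (by norm_num)
        (fun x hx hx' => by unfold f0; rw [if_neg (by linarith), if_pos (by linarith)]),
      step_int f0 196 (1/2) (3/4) (by norm_num)
        (fun x hx hx' => by
          unfold f0; rw [if_neg (by linarith), if_neg (by linarith), if_pos (by linarith)]),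
      step_int f0 0 (3/4) t (by linarith)
        (fun x hx hx' => by
          unfold f0;
          rw [if_neg (by linarith), if_neg (by linarith), if_neg (by linarith)])]
    ring

lemma intG : ∀ t ∈ Icc (0:ℝ) 1, (∫ x in t..(1:ℝ), g0 x) = Gv t := by
  rintro t ⟨h0, h1⟩
  unfold Gv
  split_ifs with h14 h12 h34
  · rw [← intervalIntegral.integral_add_adjacent_intervals (g0_ii t (3/4)) (g0_ii (3/4) 1),
      ← intervalIntegral.integral_add_adjacent_intervals (g0_ii t (1/2)) (g0_ii (1/2) (3/4)),
      ← intervalIntegral.integral_add_adjacent_intervals (g0_ii t (1/4)) (g0_ii (1/4) (1/2)),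
      step_int g0 0 t (1/4) (by linarith)
        (fun x hx hx' => by unfold g0; rw [if_pos (by linarith)]),
      step_int g0 196 (1/4) (1/2) (by norm_num)
        (fun x hx hx' => by unfold g0; rw [if_neg (by linarith), if_pos (by linarith)]),
      step_int g0 0 (1/2) (3/4) (by norm_num)
        (fun x hx hx' => by
          unfold g0; rw [if_neg (by linarith), if_neg (by linarith), if_pos (by linarith)]),
      step_int g0 81 (3/4) 1 (by norm_num)
        (fun x hx hx' => by
          unfold g0;
          rw [if_neg (by linarith), if_neg (by linarith), if_neg (by linarith)])]
    ring
  · push_neg at h14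
    rw [← intervalIntegral.integral_add_adjacent_intervals (g0_ii t (3/4)) (g0_ii (3/4) 1),
      ← intervalIntegral.integral_add_adjacent_intervals (g0_ii t (1/2)) (g0_ii (1/2) (3/4)),
      step_int g0 196 t (1/2) (by linarith)
        (fun x hx hx' => by unfold g0; rw [if_neg (by linarith), if_pos (by linarith)]),
      step_int g0 0 (1/2) (3/4) (by norm_num)
        (fun x hx hx' => by
          unfold g0; rw [if_neg (by linarith), if_neg (by linarith), if_pos (by linarith)]),
      step_int g0 81 (3/4) 1 (by norm_num)
        (fun x hx hx' => by
          unfold g0;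
          rw [if_neg (by linarith), if_neg (by linarith), if_neg (by linarith)])]
    ring
  · push_neg at h14 h12
    rw [← intervalIntegral.integral_add_adjacent_intervals (g0_ii t (3/4)) (g0_ii (3/4) 1),
      step_int g0 0 t (3/4) (by linarith)
        (fun x hx hx' => by
          unfold g0; rw [if_neg (by linarith), if_neg (by linarith), if_pos (by linarith)]),
      step_int g0 81 (3/4) 1 (by norm_num)
        (fun x hx hx' => by
          unfold g0;
          rw [if_neg (by linarith), if_neg (by linarith), if_neg (by linarith)])]
    ring
  · push_neg at h14 h12 h34
    rw [step_int g0 81 t 1 (by linarith)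
        (fun x hx hx' => by
          unfold g0;
          rw [if_neg (by linarith), if_neg (by linarith), if_neg (by linarith)])]

lemma Fsym : ∀ t : ℝ, 0 ≤ t → t ≤ 1 → Fv (1 - t) = Gv t := by
  intro t h0 h1; unfold Fv Gv; split_ifs <;> linarith

lemma Gsym : ∀ t : ℝ, 0 ≤ t → t ≤ 1 → Gv (1 - t) = Fv t := by
  intro t h0 h1; unfold Fv Gv; split_ifs <;> linarith

lemma FGbounds : ∀ t ∈ Icc (0:ℝ) 1,
    (Fv t ≤ 81/4 ∧ Gv t ≤ 277/4) ∨ (Fv t ≤ 277/4 ∧ Gv t ≤ 81/4) := by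
  rintro t ⟨h0, h1⟩
  unfold Fv Gv
  split_ifs with h14 h12 h34
  · left; constructor <;> linarith
  · left; constructor <;> linarith
  · right; constructor <;> linarith
  · right; constructor <;> linarith

lemma sqrt_sum_le {a b : ℝ}
    (h : (a ≤ 81/4 ∧ b ≤ 277/4) ∨ (a ≤ 277/4 ∧ b ≤ 81/4)) :
    Real.sqrt ((1/2)*a) + Real.sqrt ((1/2)*b) ≤
      Real.sqrt ((1/2)*(81/4)) + Real.sqrt ((1/2)*(277/4)) := by
  rcases h with ⟨h1, h2⟩ | ⟨h1, h2⟩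
  · exact add_le_add (Real.sqrt_le_sqrt (by linarith)) (Real.sqrt_le_sqrt (by linarith))
  · rw [add_comm]
    exact add_le_add (Real.sqrt_le_sqrt (by linarith)) (Real.sqrt_le_sqrt (by linarith))

/-- The explicit example of Appendix A.5 of the paper: the simplified warping
objective `Φ` is symmetric about `1/2` and attains its maximum at both `1/4` and `3/4`,
so optimal warpings are not unique. Here the Euclidean inner product on `ℝ²` is written
out in coordinates. -/
theorem stmt_18 (p : ℝ → ℝ × ℝ)
    (hp : ∀ t : ℝ, p t =
      if t < 1/4 then ((-3 : ℝ), (0 : ℝ))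
      else if t < 1/2 then (2, -4)
      else if t < 3/4 then (-4, 2)
      else (0, -3))
    (Φ : ℝ → ℝ)
    (hΦ : ∀ t₁ : ℝ, Φ t₁ =
      Real.sqrt ((1/2) * ∫ t in (0:ℝ)..t₁,
        (max ((p t).1 * (-3) + (p t).2 * 1) 0) ^ 2) +
      Real.sqrt ((1/2) * ∫ t in t₁..(1:ℝ),
        (max ((p t).1 * 1 + (p t).2 * (-3)) 0) ^ 2)) :
    (∀ t₁ ∈ Icc (0:ℝ) 1, Φ (1 - t₁) = Φ t₁) ∧
    (∀ t₁ ∈ Icc (0:ℝ) 1, Φ t₁ ≤ Φ (1/4)) ∧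
    (∀ t₁ ∈ Icc (0:ℝ) 1, Φ t₁ ≤ Φ (3/4)) := by
  have hf : ∀ t : ℝ, (max ((p t).1 * (-3) + (p t).2 * 1) 0) ^ 2 = f0 t := by
    intro t; rw [hp t]; unfold f0; split_ifs <;> norm_num
  have hg : ∀ t : ℝ, (max ((p t).1 * 1 + (p t).2 * (-3)) 0) ^ 2 = g0 t := by
    intro t; rw [hp t]; unfold g0; split_ifs <;> norm_num
  have hΦ' : ∀ t ∈ Icc (0:ℝ) 1,
      Φ t = Real.sqrt ((1/2) * Fv t) + Real.sqrt ((1/2) * Gv t) := by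
    intro t ht
    have e1 : (∫ x in (0:ℝ)..t, (max ((p x).1 * (-3) + (p x).2 * 1) 0) ^ 2) = Fv t := by
      rw [intervalIntegral.integral_congr (g := f0) (fun x _ => hf x)]
      exact intF t ht
    have e2 : (∫ x in t..(1:ℝ), (max ((p x).1 * 1 + (p x).2 * (-3)) 0) ^ 2) = Gv t := by
      rw [intervalIntegral.integral_congr (g := g0) (fun x _ => hg x)]
      exact intG t ht
    rw [hΦ, e1, e2]
  have h14 : (1/4 : ℝ) ∈ Icc (0:ℝ) 1 := by norm_num
  have h34 : (3/4 : ℝ) ∈ Icc (0:ℝ) 1 := by norm_num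
  have hF14 : Fv (1/4) = 81/4 := by unfold Fv; norm_num
  have hG14 : Gv (1/4) = 277/4 := by unfold Gv; norm_num
  have hF34 : Fv (3/4) = 277/4 := by unfold Fv; norm_num
  have hG34 : Gv (3/4) = 81/4 := by unfold Gv; norm_num
  refine ⟨?_, ?_, ?_⟩
  · intro t ht
    have ht' : (1 - t) ∈ Icc (0:ℝ) 1 := ⟨by linarith [ht.2], by linarith [ht.1]⟩
    rw [hΦ' _ ht', hΦ' _ ht, Fsym t ht.1 ht.2, Gsym t ht.1 ht.2, add_comm]
  · intro t ht
    rw [hΦ' _ ht, hΦ' _ h14, hF14, hG14]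
    exact sqrt_sum_le (FGbounds t ht)
  · intro t ht
    rw [hΦ' _ ht, hΦ' _ h34, hF34, hG34]
    have := sqrt_sum_le (FGbounds t ht)
    linarith
end
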